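/- arXiv:2605.26859 — 3 statements merged into one kernel-verified Lean document; each statement's English description precedes it below -/
import Mathlib

section
/- The bigraph H₀ is not a 𝓤-bigraph; that is, H₀ admits no intersection representation by unit intervals of the four types (closed, open, closed-open, open-closed). -/
/-- `𝓤⁺⁺`: the family of closed unit intervals `[a, a+1]`. -/
def UnitCC : Set (Set ℝ) := {s | ∃ a : ℝ, s = Set.Icc a (a + 1)}

/-- `𝓤⁻⁻`: the family of open unit intervals `(a, a+1)`. -/
def UnitOO : Set (Set ℝ) := {s | ∃ a : ℝ, s = Set.Ioo a (a + 1)}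

/-- `𝓤⁺⁻`: the family of closed-open unit intervals `[a, a+1)`. -/
def UnitCO : Set (Set ℝ) := {s | ∃ a : ℝ, s = Set.Ico a (a + 1)}

/-- `𝓤⁻⁺`: the family of open-closed unit intervals `(a, a+1]`. -/
def UnitOC : Set (Set ℝ) := {s | ∃ a : ℝ, s = Set.Ioc a (a + 1)}

/-- `𝓤`: all unit intervals of the four types. -/
def UnitFam : Set (Set ℝ) := UnitCC ∪ UnitOO ∪ UnitCO ∪ UnitOC

/-- A bigraph `B = (X, Y, E)` is an `M`-bigraph if it admits an `M`-intersection
representation: a function `f` on the vertices, with values in `M`, such that for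
`x ∈ X` and `y ∈ Y`, `xy ∈ E` iff `f x ∩ f y ≠ ∅`. -/
def IsMBigraph (M : Set (Set ℝ)) {X Y : Type} (E : X → Y → Prop) : Prop :=
  ∃ f : X ⊕ Y → Set ℝ, (∀ v, f v ∈ M) ∧
    ∀ x y, E x y ↔ (f (Sum.inl x) ∩ f (Sum.inr y)).Nonempty

/-- The bigraph `H₀`: `X = {x₁, …, x₆}` (indices `0,…,5`),
`Y = {y₁, …, y₅}` (indices `0,…,4`), edges
`x₄y₂, x₄y₃, x₃y₃, x₃y₁, x₂y₁, x₂y₂, x₄y₁, x₁y₁, x₁y₄, x₅y₄, x₅y₁, x₁y₅, x₆y₁`. -/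
def H0E : Fin 6 → Fin 5 → Prop := fun x y =>
  (x.val, y.val) ∈
    ([(3, 1), (3, 2), (2, 2), (2, 0), (1, 0), (1, 1), (3, 0), (0, 0), (0, 3),
      (4, 3), (4, 0), (0, 4), (5, 0)] : List (ℕ × ℕ))

/- ----------------------------------------------------------------
   Auxiliary machinery
---------------------------------------------------------------- -/

/-- A generic unit interval with left endpoint `a`; `l` (resp. `r`) records
whether the left (resp. right) endpoint is included. -/
def gi (a : ℝ) (l r : Bool) : Set ℝ :=
  {x : ℝ | (if l then a ≤ x else a < x) ∧ (if r then x ≤ a + 1 else x < a + 1)}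

lemma gi_bounds {a : ℝ} {l r : Bool} {x : ℝ} (h : x ∈ gi a l r) :
    a ≤ x ∧ x ≤ a + 1 := by
  obtain ⟨h1, h2⟩ := h
  constructor
  · cases l <;> simp at h1 <;> linarith
  · cases r <;> simp at h2 <;> linarith

lemma gi_mem_of_lt {a x : ℝ} (l r : Bool) (h1 : a < x) (h2 : x < a + 1) :
    x ∈ gi a l r := by
  refine ⟨?_, ?_⟩
  · cases l <;> simp <;> linarith
  · cases r <;> simp <;> linarith

lemma mem_gi_right (a : ℝ) (l : Bool) : a + 1 ∈ gi a l true := by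
  refine ⟨?_, ?_⟩
  · cases l <;> simp <;> linarith
  · simp

lemma mem_gi_left (b : ℝ) (r : Bool) : b ∈ gi b true r := by
  refine ⟨?_, ?_⟩
  · simp
  · cases r <;> simp <;> linarith

/-- Edge condition: what a nonempty intersection forces. -/
def EC (a : ℝ) (l r : Bool) (b : ℝ) (l' r' : Bool) : Prop :=
  a ≤ b + 1 ∧ b ≤ a + 1 ∧ (b = a + 1 → r = true ∧ l' = true) ∧
    (a = b + 1 → r' = true ∧ l = true)

/-- Non-edge condition: what an empty intersection forces. -/
def NC (a : ℝ) (l r : Bool) (b : ℝ) (l' r' : Bool) : Prop :=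
  (a + 1 ≤ b ∨ b + 1 ≤ a) ∧ (b = a + 1 → ¬(r = true ∧ l' = true)) ∧
    (a = b + 1 → ¬(r' = true ∧ l = true))

lemma EC_of {a b : ℝ} {l r l' r' : Bool}
    (h : (gi a l r ∩ gi b l' r').Nonempty) : EC a l r b l' r' := by
  obtain ⟨x, hx, hx'⟩ := h
  obtain ⟨ha1, ha2⟩ := gi_bounds hx
  obtain ⟨hb1, hb2⟩ := gi_bounds hx'
  obtain ⟨hxl, hxr⟩ := hx
  obtain ⟨hxl', hxr'⟩ := hx'
  refine ⟨by linarith, by linarith, ?_, ?_⟩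
  · intro hba
    have hxa : x = a + 1 := le_antisymm ha2 (by linarith)
    constructor
    · cases r
      · simp at hxr; linarith
      · rfl
    · cases l'
      · simp at hxl'; linarith
      · rfl
  · intro hab
    have hxb : x = b + 1 := le_antisymm hb2 (by linarith)
    constructor
    · cases r'
      · simp at hxr'; linarith
      · rfl
    · cases l
      · simp at hxl; linarith
      · rfl

lemma NC_of {a b : ℝ} {l r l' r' : Bool}
    (h : ¬ (gi a l r ∩ gi b l' r').Nonempty) : NC a l r b l' r' := by
  refine ⟨?_, ?_, ?_⟩
  · by_contra hc
    push_neg at hc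
    obtain ⟨h1, h2⟩ := hc
    apply h
    rcases le_total a b with hab | hab
    · exact ⟨(b + (a + 1)) / 2, gi_mem_of_lt l r (by linarith) (by linarith),
        gi_mem_of_lt l' r' (by linarith) (by linarith)⟩
    · exact ⟨(a + (b + 1)) / 2, gi_mem_of_lt l r (by linarith) (by linarith),
        gi_mem_of_lt l' r' (by linarith) (by linarith)⟩
  · rintro hba ⟨hr, hl'⟩
    subst hr; subst hl'; subst hba
    exact h ⟨a + 1, mem_gi_right a l, mem_gi_left (a + 1) r'⟩
  · rintro hab ⟨hr', hl⟩
    subst hr'; subst hl; subst hab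
    exact h ⟨b + 1, mem_gi_left (b + 1) r, mem_gi_right b l'⟩

lemma mem_unitFam {s : Set ℝ} (h : s ∈ UnitFam) :
    ∃ (a : ℝ) (l r : Bool), s = gi a l r := by
  rcases h with ((⟨a, rfl⟩ | ⟨a, rfl⟩) | ⟨a, rfl⟩) | ⟨a, rfl⟩
  · exact ⟨a, true, true, by ext x; simp [gi, Set.mem_Icc]⟩
  · exact ⟨a, false, false, by ext x; simp [gi, Set.mem_Ioo]⟩
  · exact ⟨a, true, false, by ext x; simp [gi, Set.mem_Ico]⟩
  · exact ⟨a, false, true, by ext x; simp [gi, Set.mem_Ioc]⟩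

/-- The core combinatorial contradiction. -/
lemma core
    {a1 a2 a3 a4 a5 a6 b1 b2 b3 b4 b5 : ℝ}
    {lx1 rx1 lx2 rx2 lx3 rx3 lx4 rx4 lx5 rx5 lx6 rx6
     ly1 ry1 ly2 ry2 ly3 ry3 ly4 ry4 ly5 ry5 : Bool}
    (e21 : EC a2 lx2 rx2 b1 ly1 ry1)
    (e22 : EC a2 lx2 rx2 b2 ly2 ry2)
    (e31 : EC a3 lx3 rx3 b1 ly1 ry1)
    (e33 : EC a3 lx3 rx3 b3 ly3 ry3)
    (e41 : EC a4 lx4 rx4 b1 ly1 ry1)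
    (e42 : EC a4 lx4 rx4 b2 ly2 ry2)
    (e43 : EC a4 lx4 rx4 b3 ly3 ry3)
    (e11 : EC a1 lx1 rx1 b1 ly1 ry1)
    (e14 : EC a1 lx1 rx1 b4 ly4 ry4)
    (e15 : EC a1 lx1 rx1 b5 ly5 ry5)
    (e51 : EC a5 lx5 rx5 b1 ly1 ry1)
    (e54 : EC a5 lx5 rx5 b4 ly4 ry4)
    (e61 : EC a6 lx6 rx6 b1 ly1 ry1)
    (n12 : NC a1 lx1 rx1 b2 ly2 ry2)
    (n13 : NC a1 lx1 rx1 b3 ly3 ry3)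
    (n23 : NC a2 lx2 rx2 b3 ly3 ry3)
    (n32 : NC a3 lx3 rx3 b2 ly2 ry2)
    (n52 : NC a5 lx5 rx5 b2 ly2 ry2)
    (n53 : NC a5 lx5 rx5 b3 ly3 ry3)
    (n55 : NC a5 lx5 rx5 b5 ly5 ry5)
    (n62 : NC a6 lx6 rx6 b2 ly2 ry2)
    (n63 : NC a6 lx6 rx6 b3 ly3 ry3)
    (n64 : NC a6 lx6 rx6 b4 ly4 ry4)
    (hq : b2 ≤ b3) : False := by
  obtain ⟨e21a, e21b, e21c, e21d⟩ := e21
  obtain ⟨e22a, e22b, e22c, e22d⟩ := e22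
  obtain ⟨e31a, e31b, e31c, e31d⟩ := e31
  obtain ⟨e33a, e33b, e33c, e33d⟩ := e33
  obtain ⟨e41a, e41b, e41c, e41d⟩ := e41
  obtain ⟨e42a, e42b, e42c, e42d⟩ := e42
  obtain ⟨e43a, e43b, e43c, e43d⟩ := e43
  obtain ⟨e11a, e11b, e11c, e11d⟩ := e11
  obtain ⟨e14a, e14b, e14c, e14d⟩ := e14
  obtain ⟨e15a, e15b, e15c, e15d⟩ := e15
  obtain ⟨e51a, e51b, e51c, e51d⟩ := e51
  obtain ⟨e54a, e54b, e54c, e54d⟩ := e54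
  obtain ⟨e61a, e61b, e61c, e61d⟩ := e61
  obtain ⟨n12a, n12b, n12c⟩ := n12
  obtain ⟨n13a, n13b, n13c⟩ := n13
  obtain ⟨n23a, n23b, n23c⟩ := n23
  obtain ⟨n32a, n32b, n32c⟩ := n32
  obtain ⟨n52a, n52b, n52c⟩ := n52
  obtain ⟨n53a, n53b, n53c⟩ := n53
  obtain ⟨n55a, n55b, n55c⟩ := n55
  obtain ⟨n62a, n62b, n62c⟩ := n62
  obtain ⟨n63a, n63b, n63c⟩ := n63
  obtain ⟨n64a, n64b, n64c⟩ := n64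
  rcases eq_or_lt_of_le hq with h23 | h23
  · -- Case A : b2 = b3
    rcases n23a with h | h
    · -- a2 + 1 ≤ b3, so b2 = a2 + 1
      have hA : b2 = a2 + 1 := by linarith
      obtain ⟨hra2, hlb2⟩ := e22c hA
      have hly3 : ¬ (ly3 = true) := fun hh => n23b (by linarith) ⟨hra2, hh⟩
      rcases n32a with h' | h'
      · exact hly3 (e33c (by linarith : b3 = a3 + 1)).2
      · have hB : a3 = b3 + 1 := by linarith
        obtain ⟨hry3, hla3⟩ := e33d hB
        have hb1 : b1 = b2 := by linarith
        rcases n12a with h'' | h''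
        · obtain ⟨hra1, _⟩ := e11c (by linarith : b1 = a1 + 1)
          exact n12b (by linarith : b2 = a1 + 1) ⟨hra1, hlb2⟩
        · obtain ⟨hry1, hla1⟩ := e11d (by linarith : a1 = b1 + 1)
          exact n13c (by linarith : a1 = b3 + 1) ⟨hry3, hla1⟩
    · -- b3 + 1 ≤ a2, so a2 = b2 + 1
      have hA : a2 = b2 + 1 := by linarith
      obtain ⟨hry2, hla2⟩ := e22d hA
      have hry3 : ¬ (ry3 = true) := fun hh => n23c (by linarith) ⟨hh, hla2⟩
      rcases n32a with h' | h'
      · obtain ⟨hra3, hlb3⟩ := e33c (by linarith : b3 = a3 + 1)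
        have hb1 : b1 = b2 := by linarith
        rcases n12a with h'' | h''
        · obtain ⟨hra1, _⟩ := e11c (by linarith : b1 = a1 + 1)
          exact n13b (by linarith : b3 = a1 + 1) ⟨hra1, hlb3⟩
        · obtain ⟨hry1, hla1⟩ := e11d (by linarith : a1 = b1 + 1)
          exact n12c (by linarith : a1 = b2 + 1) ⟨hry2, hla1⟩
      · exact hry3 (e33d (by linarith : a3 = b3 + 1)).1
  · -- Case B : b2 < b3
    have hp3 : b2 + 1 ≤ a3 := by
      rcases n32a with h | h
      · linarith
      · exact h
    have hp2 : a2 + 1 ≤ b3 := by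
      rcases n23a with h | h
      · exact h
      · linarith
    have hb21 : b2 ≤ b1 := by linarith
    have hb13 : b1 ≤ b3 := by linarith
    rcases eq_or_lt_of_le hb21 with hI | hI
    · -- Subcase I : b2 = b1 < b3
      have ha3 : a3 = b1 + 1 := le_antisymm e31a (by linarith)
      obtain ⟨hry1, hla3⟩ := e31d ha3
      have hry2 : ¬ (ry2 = true) := fun hh => n32c (by linarith) ⟨hh, hla3⟩
      have hb3lt : b3 < b1 + 2 := by
        rcases lt_or_eq_of_le (by linarith : b3 ≤ b1 + 2) with h | h
        · exact h
        · exfalso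
          have ha4 : a4 = b1 + 1 := le_antisymm e41a (by linarith)
          exact hry2 (e42d (by linarith : a4 = b2 + 1)).1
      have key : ∀ (a : ℝ) (l r : Bool), EC a l r b1 ly1 ry1 →
          NC a l r b2 ly2 ry2 → NC a l r b3 ly3 ry3 →
          b1 = a + 1 ∧ r = true := by
        rintro a l r ⟨ea, eb, ec, ed⟩ ⟨na2, _, _⟩ ⟨na3, _, _⟩
        rcases na2 with h | h
        · have : b1 = a + 1 := by linarith
          exact ⟨this, (ec this).1⟩
        · exfalso
          rcases na3 with h' | h' <;> linarith
      obtain ⟨h1e, hra1⟩ := key a1 lx1 rx1 ⟨e11a, e11b, e11c, e11d⟩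
        ⟨n12a, n12b, n12c⟩ ⟨n13a, n13b, n13c⟩
      obtain ⟨h5e, hra5⟩ := key a5 lx5 rx5 ⟨e51a, e51b, e51c, e51d⟩
        ⟨n52a, n52b, n52c⟩ ⟨n53a, n53b, n53c⟩
      obtain ⟨h6e, hra6⟩ := key a6 lx6 rx6 ⟨e61a, e61b, e61c, e61d⟩
        ⟨n62a, n62b, n62c⟩ ⟨n63a, n63b, n63c⟩
      rcases n55a with h | h
      · have hb5 : b5 = a1 + 1 := le_antisymm e15b (by linarith)
        exact n55b (by linarith : b5 = a5 + 1) ⟨hra5, (e15c hb5).2⟩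
      · have hb5 : a1 = b5 + 1 := le_antisymm e15a (by linarith)
        have hry5 : ry5 = true := (e15d hb5).1
        have hla5 : ¬ (lx5 = true) :=
          fun hh => n55c (by linarith : a5 = b5 + 1) ⟨hry5, hh⟩
        rcases n64a with h' | h'
        · have hb4 : b4 = a1 + 1 := le_antisymm e14b (by linarith)
          exact n64b (by linarith : b4 = a6 + 1) ⟨hra6, (e14c hb4).2⟩
        · have hb4 : a5 = b4 + 1 := le_antisymm e54a (by linarith)
          exact hla5 (e54d hb4).2
    · rcases eq_or_lt_of_le hb13 with hIII | hII
      · -- Subcase III : b2 < b1 = b3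
        have ha2 : b1 = a2 + 1 := le_antisymm e21b (by linarith)
        obtain ⟨hra2, hlb1⟩ := e21c ha2
        have hly3 : ¬ (ly3 = true) :=
          fun hh => n23b (by linarith : b3 = a2 + 1) ⟨hra2, hh⟩
        have hb2gt : b1 - 2 < b2 := by
          rcases lt_or_eq_of_le (by linarith : b1 - 2 ≤ b2) with h | h
          · exact h
          · exfalso
            have ha4 : b1 = a4 + 1 := le_antisymm e41b (by linarith)
            exact hly3 (e43c (by linarith : b3 = a4 + 1)).2
        have key : ∀ (a : ℝ) (l r : Bool), EC a l r b1 ly1 ry1 →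
            NC a l r b2 ly2 ry2 → NC a l r b3 ly3 ry3 →
            a = b1 + 1 ∧ l = true := by
          rintro a l r ⟨ea, eb, ec, ed⟩ ⟨na2, _, _⟩ ⟨na3, _, _⟩
          rcases na3 with h | h
          · exfalso
            rcases na2 with h' | h' <;> linarith
          · have : a = b1 + 1 := le_antisymm ea (by linarith)
            exact ⟨this, (ed this).2⟩
        obtain ⟨h1e, hla1⟩ := key a1 lx1 rx1 ⟨e11a, e11b, e11c, e11d⟩
          ⟨n12a, n12b, n12c⟩ ⟨n13a, n13b, n13c⟩
        obtain ⟨h5e, hla5⟩ := key a5 lx5 rx5 ⟨e51a, e51b, e51c, e51d⟩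
          ⟨n52a, n52b, n52c⟩ ⟨n53a, n53b, n53c⟩
        obtain ⟨h6e, hla6⟩ := key a6 lx6 rx6 ⟨e61a, e61b, e61c, e61d⟩
          ⟨n62a, n62b, n62c⟩ ⟨n63a, n63b, n63c⟩
        rcases n55a with h | h
        · have hb5 : b5 = a1 + 1 := le_antisymm e15b (by linarith)
          have hra5 : ¬ (rx5 = true) :=
            fun hh => n55b (by linarith : b5 = a5 + 1) ⟨hh, (e15c hb5).2⟩
          rcases n64a with h' | h'
          · have hb4 : b4 = a5 + 1 := le_antisymm (by linarith) (by linarith)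
            exact hra5 (e54c hb4).1
          · have hb4 : a1 = b4 + 1 := le_antisymm e14a (by linarith)
            exact n64c (by linarith : a6 = b4 + 1) ⟨(e14d hb4).1, hla6⟩
        · have hb5 : a1 = b5 + 1 := le_antisymm e15a (by linarith)
          exact n55c (by linarith : a5 = b5 + 1) ⟨(e15d hb5).1, hla5⟩
      · -- Subcase II : b2 < b1 < b3
        have key : ∀ (a : ℝ) (l r : Bool), EC a l r b1 ly1 ry1 →
            NC a l r b2 ly2 ry2 → NC a l r b3 ly3 ry3 →
            b2 + 1 ≤ a ∧ a + 1 ≤ b3 := by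
          rintro a l r ⟨ea, eb, _, _⟩ ⟨na2, _, _⟩ ⟨na3, _, _⟩
          constructor
          · rcases na2 with h | h
            · exfalso; linarith
            · exact h
          · rcases na3 with h | h
            · exact h
            · exfalso; linarith
        obtain ⟨h1l, h1r⟩ := key a1 lx1 rx1 ⟨e11a, e11b, e11c, e11d⟩
          ⟨n12a, n12b, n12c⟩ ⟨n13a, n13b, n13c⟩
        obtain ⟨h5l, h5r⟩ := key a5 lx5 rx5 ⟨e51a, e51b, e51c, e51d⟩
          ⟨n52a, n52b, n52c⟩ ⟨n53a, n53b, n53c⟩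
        have ha1 : a1 = b2 + 1 := by linarith
        have ha5 : a5 = b2 + 1 := by linarith
        have ha4 : a4 = b2 + 1 := by linarith
        have hb3 : b3 = b2 + 2 := by linarith
        have hry2 : ry2 = true := (e42d (by linarith : a4 = b2 + 1)).1
        have hly3 : ly3 = true := (e43c (by linarith : b3 = a4 + 1)).2
        have hnla1 : ¬ (lx1 = true) :=
          fun hh => n12c (by linarith : a1 = b2 + 1) ⟨hry2, hh⟩
        have hnra1 : ¬ (rx1 = true) :=
          fun hh => n13b (by linarith : b3 = a1 + 1) ⟨hh, hly3⟩
        rcases n55a with h | h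
        · have hb5 : b5 = a1 + 1 := le_antisymm e15b (by linarith)
          exact hnra1 (e15c hb5).1
        · have hb5 : a1 = b5 + 1 := le_antisymm e15a (by linarith)
          exact hnla1 (e15d hb5).2

/-- `H₀` is not a mixed unit interval bigraph. -/
theorem H0_not_U_bigraph : ¬ IsMBigraph UnitFam H0E := by
  rintro ⟨f, hmem, hadj⟩
  obtain ⟨ax1, lx1, rx1, hx1⟩ := mem_unitFam (hmem (Sum.inl 0))
  obtain ⟨ax2, lx2, rx2, hx2⟩ := mem_unitFam (hmem (Sum.inl 1))
  obtain ⟨ax3, lx3, rx3, hx3⟩ := mem_unitFam (hmem (Sum.inl 2))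
  obtain ⟨ax4, lx4, rx4, hx4⟩ := mem_unitFam (hmem (Sum.inl 3))
  obtain ⟨ax5, lx5, rx5, hx5⟩ := mem_unitFam (hmem (Sum.inl 4))
  obtain ⟨ax6, lx6, rx6, hx6⟩ := mem_unitFam (hmem (Sum.inl 5))
  obtain ⟨by1, ly1, ry1, hy1⟩ := mem_unitFam (hmem (Sum.inr 0))
  obtain ⟨by2, ly2, ry2, hy2⟩ := mem_unitFam (hmem (Sum.inr 1))
  obtain ⟨by3, ly3, ry3, hy3⟩ := mem_unitFam (hmem (Sum.inr 2))
  obtain ⟨by4, ly4, ry4, hy4⟩ := mem_unitFam (hmem (Sum.inr 3))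
  obtain ⟨by5, ly5, ry5, hy5⟩ := mem_unitFam (hmem (Sum.inr 4))
  have e21 : EC ax2 lx2 rx2 by1 ly1 ry1 := EC_of (by
    have h := (hadj 1 0).mp (by unfold H0E; decide); rwa [hx2, hy1] at h)
  have e22 : EC ax2 lx2 rx2 by2 ly2 ry2 := EC_of (by
    have h := (hadj 1 1).mp (by unfold H0E; decide); rwa [hx2, hy2] at h)
  have e31 : EC ax3 lx3 rx3 by1 ly1 ry1 := EC_of (by
    have h := (hadj 2 0).mp (by unfold H0E; decide); rwa [hx3, hy1] at h)
  have e33 : EC ax3 lx3 rx3 by3 ly3 ry3 := EC_of (by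
    have h := (hadj 2 2).mp (by unfold H0E; decide); rwa [hx3, hy3] at h)
  have e41 : EC ax4 lx4 rx4 by1 ly1 ry1 := EC_of (by
    have h := (hadj 3 0).mp (by unfold H0E; decide); rwa [hx4, hy1] at h)
  have e42 : EC ax4 lx4 rx4 by2 ly2 ry2 := EC_of (by
    have h := (hadj 3 1).mp (by unfold H0E; decide); rwa [hx4, hy2] at h)
  have e43 : EC ax4 lx4 rx4 by3 ly3 ry3 := EC_of (by
    have h := (hadj 3 2).mp (by unfold H0E; decide); rwa [hx4, hy3] at h)
  have e11 : EC ax1 lx1 rx1 by1 ly1 ry1 := EC_of (by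
    have h := (hadj 0 0).mp (by unfold H0E; decide); rwa [hx1, hy1] at h)
  have e14 : EC ax1 lx1 rx1 by4 ly4 ry4 := EC_of (by
    have h := (hadj 0 3).mp (by unfold H0E; decide); rwa [hx1, hy4] at h)
  have e15 : EC ax1 lx1 rx1 by5 ly5 ry5 := EC_of (by
    have h := (hadj 0 4).mp (by unfold H0E; decide); rwa [hx1, hy5] at h)
  have e51 : EC ax5 lx5 rx5 by1 ly1 ry1 := EC_of (by
    have h := (hadj 4 0).mp (by unfold H0E; decide); rwa [hx5, hy1] at h)
  have e54 : EC ax5 lx5 rx5 by4 ly4 ry4 := EC_of (by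
    have h := (hadj 4 3).mp (by unfold H0E; decide); rwa [hx5, hy4] at h)
  have e61 : EC ax6 lx6 rx6 by1 ly1 ry1 := EC_of (by
    have h := (hadj 5 0).mp (by unfold H0E; decide); rwa [hx6, hy1] at h)
  have n12 : NC ax1 lx1 rx1 by2 ly2 ry2 := NC_of (by
    intro hn
    exact absurd ((hadj 0 1).mpr (by rw [hx1, hy2]; exact hn))
      (by unfold H0E; decide))
  have n13 : NC ax1 lx1 rx1 by3 ly3 ry3 := NC_of (by
    intro hn
    exact absurd ((hadj 0 2).mpr (by rw [hx1, hy3]; exact hn))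
      (by unfold H0E; decide))
  have n23 : NC ax2 lx2 rx2 by3 ly3 ry3 := NC_of (by
    intro hn
    exact absurd ((hadj 1 2).mpr (by rw [hx2, hy3]; exact hn))
      (by unfold H0E; decide))
  have n32 : NC ax3 lx3 rx3 by2 ly2 ry2 := NC_of (by
    intro hn
    exact absurd ((hadj 2 1).mpr (by rw [hx3, hy2]; exact hn))
      (by unfold H0E; decide))
  have n52 : NC ax5 lx5 rx5 by2 ly2 ry2 := NC_of (by
    intro hn
    exact absurd ((hadj 4 1).mpr (by rw [hx5, hy2]; exact hn))
      (by unfold H0E; decide))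
  have n53 : NC ax5 lx5 rx5 by3 ly3 ry3 := NC_of (by
    intro hn
    exact absurd ((hadj 4 2).mpr (by rw [hx5, hy3]; exact hn))
      (by unfold H0E; decide))
  have n55 : NC ax5 lx5 rx5 by5 ly5 ry5 := NC_of (by
    intro hn
    exact absurd ((hadj 4 4).mpr (by rw [hx5, hy5]; exact hn))
      (by unfold H0E; decide))
  have n62 : NC ax6 lx6 rx6 by2 ly2 ry2 := NC_of (by
    intro hn
    exact absurd ((hadj 5 1).mpr (by rw [hx6, hy2]; exact hn))
      (by unfold H0E; decide))
  have n63 : NC ax6 lx6 rx6 by3 ly3 ry3 := NC_of (by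
    intro hn
    exact absurd ((hadj 5 2).mpr (by rw [hx6, hy3]; exact hn))
      (by unfold H0E; decide))
  have n64 : NC ax6 lx6 rx6 by4 ly4 ry4 := NC_of (by
    intro hn
    exact absurd ((hadj 5 3).mpr (by rw [hx6, hy4]; exact hn))
      (by unfold H0E; decide))
  rcases le_total by2 by3 with h | h
  · exact core e21 e22 e31 e33 e41 e42 e43 e11 e14 e15 e51 e54 e61
      n12 n13 n23 n32 n52 n53 n55 n62 n63 n64 h
  · exact core e31 e33 e21 e22 e41 e43 e42 e11 e14 e15 e51 e54 e61
      n13 n12 n32 n23 n53 n52 n55 n63 n62 n64 h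
end

section
/- For every integer i ≥ 1, the bigraph P_i is not a 𝓤-bigraph; that is, P_i admits no intersection representation by unit intervals of the four types (closed, open, closed-open, open-closed). -/
/-- A bigraph given by a proper 2-coloring `color` of a (symmetric) adjacency
relation `Adj` — the partite sets `X` and `Y` being the two color classes — is a
`𝓤`-bigraph if it admits a `𝓤`-intersection representation: a function `f` on the
vertices, with values unit intervals of the four types, such that two vertices in
different partite sets are adjacent iff their intervals intersect. -/
def IsUBigraph {V : Type} (color : V → Bool) (Adj : V → V → Prop) : Prop :=
  ∃ f : V → Set ℝ, (∀ v, f v ∈ UnitFam) ∧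
    ∀ u v, color u ≠ color v → (Adj u v ↔ (f u ∩ f v).Nonempty)

/-- The vertices of the bigraph `P_i`: core vertices `A, C, F` in one partite set
and `B, D, E, G` in the other; a path `p₁–⋯–p_i` (`p k` is `p_{k+1}`) with `p₁`
adjacent to `B` and `D`; a pendant leaf `lp k` at `p_{k+1}` for `k+1 ≤ i-1`; and
two vertex-disjoint paths `p_i–s1–t1`, `p_i–s2–t2` of length 2 at `p_i`. -/
inductive PVert (i : ℕ) : Type
  | vA | vC | vF | vB | vD | vE | vG
  | p (k : Fin i)
  | lp (k : Fin (i - 1))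
  | s1 | t1 | s2 | t2

/-- One orientation of each edge of `P_i` (core edges
`AB, CB, CD, CE, FB, FD, FE, FG`). -/
def PR (i : ℕ) : PVert i → PVert i → Prop
  | .vA, .vB => True
  | .vC, .vB => True
  | .vC, .vD => True
  | .vC, .vE => True
  | .vF, .vB => True
  | .vF, .vD => True
  | .vF, .vE => True
  | .vF, .vG => True
  | .vB, .p k => k.val = 0
  | .vD, .p k => k.val = 0
  | .p k, .p m => m.val = k.val + 1
  | .p k, .lp m => k.val = m.val
  | .p k, .s1 => k.val + 1 = i
  | .p k, .s2 => k.val + 1 = i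
  | .s1, .t1 => True
  | .s2, .t2 => True
  | _, _ => False

/-- The (symmetric) adjacency relation of `P_i`. -/
def PAdj (i : ℕ) (u v : PVert i) : Prop := PR i u v ∨ PR i v u

/-- The proper 2-coloring of `P_i` (`A, C, F` in the class `true = X`). -/
def PColor (i : ℕ) : PVert i → Bool
  | .vA => true
  | .vC => true
  | .vF => true
  | .vB => false
  | .vD => false
  | .vE => false
  | .vG => false
  | .p k => decide (k.val % 2 = 0)
  | .lp k => decide (k.val % 2 = 1)
  | .s1 => decide ((i - 1) % 2 = 1)
  | .t1 => decide ((i - 1) % 2 = 0)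
  | .s2 => decide ((i - 1) % 2 = 1)
  | .t2 => decide ((i - 1) % 2 = 0)

/-- An abstract (mixed) unit interval: left endpoint `a`, with
left/right endpoint types `l`, `r` (for the left endpoint, `0` = closed,
`1` = open; for the right endpoint, `1` = closed, `0` = open). -/
structure Iv : Type where
  a : ℝ
  l : ℤ
  r : ℤ
  hl : 0 ≤ l ∧ l ≤ 1
  hr : 0 ≤ r ∧ r ≤ 1

/-- `ℓ(u) < ρ(v)` in the lexicographic endpoint order. -/
abbrev LB (u v : Iv) : Prop := u.a < v.a + 1 ∨ (u.a = v.a + 1 ∧ u.l < v.r)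

/-- `ρ(u) ≤ ℓ(v)`: the interval `u` lies completely to the left of `v`. -/
abbrev LL (u v : Iv) : Prop := u.a + 1 < v.a ∨ (u.a + 1 = v.a ∧ u.r ≤ v.l)

/-- The two intervals intersect. -/
abbrev MM (u v : Iv) : Prop := LB u v ∧ LB v u

/-- The two intervals are disjoint (one lies completely left of the other). -/
abbrev SS (u v : Iv) : Prop := LL u v ∨ LL v u

lemma MM_symm {u v : Iv} (h : MM u v) : MM v u := ⟨h.2, h.1⟩

lemma SS_symm {u v : Iv} (h : SS u v) : SS v u := h.elim Or.inr Or.inl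

lemma not_LB {u v : Iv} : ¬ LB u v ↔ LL v u := by
  unfold LB LL
  constructor
  · intro h
    push_neg at h
    obtain ⟨h1, h2⟩ := h
    rcases eq_or_lt_of_le h1 with he | hlt
    · exact Or.inr ⟨he, h2 he.symm⟩
    · exact Or.inl hlt
  · rintro (h | ⟨h1, h2⟩) (hc | ⟨hc1, hc2⟩) <;> first | linarith | omega

lemma not_MM {u v : Iv} : ¬ MM u v ↔ SS u v := by
  unfold MM SS
  rw [not_and_or, not_LB, not_LB]
  exact Or.comm

/-- The key "cycle" lemma: there is no cycle
`ℓ_c < ρ_e ≤ ℓ_p < ρ_x ≤ ℓ_c`. -/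
lemma cycle4 {c e p x : Iv} (h1 : LB c e) (h2 : LL e p) (h3 : LB p x)
    (h4 : LL x c) : False := by
  rcases h1 with h1 | ⟨h1, h1'⟩ <;> rcases h2 with h2 | ⟨h2, h2'⟩ <;>
    rcases h3 with h3 | ⟨h3, h3'⟩ <;> rcases h4 with h4 | ⟨h4, h4'⟩ <;>
    first | linarith | omega

/-- The set of reals in the (generalized) unit interval. -/
def gs (a : ℝ) (l r : ℤ) : Set ℝ :=
  {x | (a < x ∨ (a = x ∧ l = 0)) ∧ (x < a + 1 ∨ (x = a + 1 ∧ r = 1))}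

lemma unit_to_gs {s : Set ℝ} (h : s ∈ UnitFam) : ∃ u : Iv, s = gs u.a u.l u.r := by
  rcases h with ((⟨a, rfl⟩ | ⟨a, rfl⟩) | ⟨a, rfl⟩) | ⟨a, rfl⟩
  · refine ⟨⟨a, 0, 1, by omega, by omega⟩, ?_⟩
    ext x
    simp only [Set.mem_Icc, gs, Set.mem_setOf_eq]
    constructor
    · rintro ⟨h1, h2⟩
      exact ⟨by rcases eq_or_lt_of_le h1 with h|h; exact Or.inr ⟨h, by norm_num⟩; exact Or.inl h,
             by rcases eq_or_lt_of_le h2 with h|h; exact Or.inr ⟨h, by norm_num⟩; exact Or.inl h⟩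
    · rintro ⟨h1 | ⟨h1, -⟩, h2 | ⟨h2, -⟩⟩ <;> constructor <;> linarith
  · refine ⟨⟨a, 1, 0, by omega, by omega⟩, ?_⟩
    ext x
    simp only [Set.mem_Ioo, gs, Set.mem_setOf_eq]
    constructor
    · rintro ⟨h1, h2⟩; exact ⟨Or.inl h1, Or.inl h2⟩
    · rintro ⟨h1 | ⟨h1, h1'⟩, h2 | ⟨h2, h2'⟩⟩ <;> first | exact ⟨by linarith, by linarith⟩ | omega
  · refine ⟨⟨a, 0, 0, by omega, by omega⟩, ?_⟩
    ext x
    simp only [Set.mem_Ico, gs, Set.mem_setOf_eq]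
    constructor
    · rintro ⟨h1, h2⟩
      exact ⟨by rcases eq_or_lt_of_le h1 with h|h; exact Or.inr ⟨h, by norm_num⟩; exact Or.inl h,
             Or.inl h2⟩
    · rintro ⟨h1 | ⟨h1, -⟩, h2 | ⟨h2, h2'⟩⟩ <;> first | exact ⟨by linarith, by linarith⟩ | omega
  · refine ⟨⟨a, 1, 1, by omega, by omega⟩, ?_⟩
    ext x
    simp only [Set.mem_Ioc, gs, Set.mem_setOf_eq]
    constructor
    · rintro ⟨h1, h2⟩
      exact ⟨Or.inl h1,
             by rcases eq_or_lt_of_le h2 with h|h; exact Or.inr ⟨h, by norm_num⟩; exact Or.inl h⟩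
    · rintro ⟨h1 | ⟨h1, h1'⟩, h2 | ⟨h2, -⟩⟩ <;> first | exact ⟨by linarith, by linarith⟩ | omega

lemma gs_inter (u v : Iv) :
    (gs u.a u.l u.r ∩ gs v.a v.l v.r).Nonempty ↔ MM u v := by
  obtain ⟨hul1, hul2⟩ := u.hl; obtain ⟨hur1, hur2⟩ := u.hr
  obtain ⟨hvl1, hvl2⟩ := v.hl; obtain ⟨hvr1, hvr2⟩ := v.hr
  constructor
  · rintro ⟨x, ⟨u1, u2⟩, ⟨v1, v2⟩⟩
    constructor
    · rcases u1 with h | ⟨h, hl⟩ <;> rcases v2 with h' | ⟨h', hr⟩ <;>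
        first
        | (left; linarith)
        | (right; constructor; linarith; omega)
    · rcases v1 with h | ⟨h, hl⟩ <;> rcases u2 with h' | ⟨h', hr⟩ <;>
        first
        | (left; linarith)
        | (right; constructor; linarith; omega)
  · rintro ⟨h1 | ⟨h1, h1'⟩, h2 | ⟨h2, h2'⟩⟩
    · -- both strict: interior point
      refine ⟨(max u.a v.a + min (u.a + 1) (v.a + 1)) / 2, ⟨?_, ?_⟩, ?_, ?_⟩ <;>
        [left; left; left; left] <;>
      · have l1 := le_max_left u.a v.a
        have l2 := le_max_right u.a v.a
        have l3 := min_le_left (u.a + 1) (v.a + 1)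
        have l4 := min_le_right (u.a + 1) (v.a + 1)
        have : max u.a v.a < min (u.a + 1) (v.a + 1) := by
          rcases max_cases u.a v.a with ⟨hm, -⟩ | ⟨hm, -⟩ <;>
            rcases min_cases (u.a + 1) (v.a + 1) with ⟨hn, -⟩ | ⟨hn, -⟩ <;> rw [hm, hn] <;> linarith
        linarith
    · -- v.a = u.a + 1 : touch at v.a
      refine ⟨v.a, ⟨?_, ?_⟩, ?_, ?_⟩
      · left; linarith
      · right; exact ⟨by linarith, by omega⟩
      · right; exact ⟨rfl, by omega⟩
      · left; linarith
    · -- u.a = v.a + 1 : touch at u.a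
      refine ⟨u.a, ⟨?_, ?_⟩, ?_, ?_⟩
      · right; exact ⟨rfl, by omega⟩
      · left; linarith
      · left; linarith
      · right; exact ⟨by linarith, by omega⟩
    · exfalso; linarith

/-- Mirror an interval across the origin. -/
def mir (u : Iv) : Iv :=
  ⟨-u.a - 1, 1 - u.r, 1 - u.l, by obtain ⟨h1,h2⟩ := u.hr; omega,
    by obtain ⟨h1,h2⟩ := u.hl; omega⟩

lemma mir_LB {u v : Iv} : LB (mir u) (mir v) ↔ LB v u := by
  unfold LB mir
  constructor
  · rintro (h | ⟨h1, h2⟩)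
    · left; dsimp at h; linarith
    · right; dsimp at h1 h2; constructor; linarith; omega
  · rintro (h | ⟨h1, h2⟩)
    · left; dsimp; linarith
    · right; dsimp; constructor; linarith; omega

lemma mir_LL {u v : Iv} : LL (mir u) (mir v) ↔ LL v u := by
  unfold LL mir
  constructor
  · rintro (h | ⟨h1, h2⟩)
    · left; dsimp at h; linarith
    · right; dsimp at h1 h2; constructor; linarith; omega
  · rintro (h | ⟨h1, h2⟩)
    · left; dsimp; linarith
    · right; dsimp; constructor; linarith; omega

lemma mir_MM {u v : Iv} : MM (mir u) (mir v) ↔ MM u v := by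
  unfold MM
  rw [mir_LB, mir_LB]
  exact And.comm

lemma mir_SS {u v : Iv} : SS (mir u) (mir v) ↔ SS u v := by
  unfold SS
  rw [mir_LL, mir_LL]
  exact Or.comm

/-- The separation condition that a "follower" of the `k`-th path vertex
satisfies: at stage `0`, separation from `A` and `C`; at stage `k+1`,
separation from the leaf `lp k`. -/
def Cond (A C : Iv) (LP : ℕ → Iv) : ℕ → Iv → Prop
  | 0, X => SS X A ∧ SS X C
  | (k+1), X => SS X (LP k)


lemma LL_real {u v : Iv} (h : LL u v) : u.a + 1 ≤ v.a := by
  rcases h with h | ⟨h, -⟩ <;> linarith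

lemma LB_real {u v : Iv} (h : LB u v) : u.a ≤ v.a + 1 := by
  rcases h with h | ⟨h, -⟩ <;> linarith

lemma LB_tie {u v : Iv} (h : LB u v) (he : u.a = v.a + 1) : u.l < v.r := by
  rcases h with h | ⟨-, h⟩; linarith; exact h

lemma LL_tie {u v : Iv} (h : LL u v) (he : u.a + 1 = v.a) : u.r ≤ v.l := by
  rcases h with h | ⟨-, h⟩; linarith; exact h

/-- Dichotomy: the first tail vertex `x` is either completely left of both
`C` and `F`, or completely right of both. -/
lemma lemma0 {C F E P0 x : Iv} (hCE : MM C E) (hFE : MM F E) (hxP : MM x P0)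
    (sPE : SS P0 E) (sxC : SS x C) (sxF : SS x F) :
    (LL x C ∧ LL x F) ∨ (LL C x ∧ LL F x) := by
  rcases sxC with hxC | hCx <;> rcases sxF with hxF | hFx
  · exact Or.inl ⟨hxC, hxF⟩
  · -- F ≺ x ≺ C : impossible
    exfalso
    have r1 : F.a + 1 ≤ x.a := LL_real hFx
    have r2 : x.a + 1 ≤ C.a := LL_real hxC
    have r3 : C.a ≤ E.a + 1 := LB_real hCE.1
    have r4 : E.a ≤ F.a + 1 := LB_real hFE.2
    have i1 : C.l < E.r := LB_tie hCE.1 (by linarith)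
    have i2 : E.l < F.r := LB_tie hFE.2 (by linarith)
    have i3 : F.r ≤ x.l := LL_tie hFx (by linarith)
    have i4 : x.r ≤ C.l := LL_tie hxC (by linarith)
    rcases sPE with hPE | hEP
    · have r5 : P0.a + 1 ≤ E.a := LL_real hPE
      have r6 : x.a ≤ P0.a + 1 := LB_real hxP.1
      have i5 : x.l < P0.r := LB_tie hxP.1 (by linarith)
      have i6 : P0.r ≤ E.l := LL_tie hPE (by linarith)
      omega
    · have r5 : E.a + 1 ≤ P0.a := LL_real hEP
      have r6 : P0.a ≤ x.a + 1 := LB_real hxP.2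
      have i5 : P0.l < x.r := LB_tie hxP.2 (by linarith)
      have i6 : E.r ≤ P0.l := LL_tie hEP (by linarith)
      omega
  · -- C ≺ x ≺ F : impossible
    exfalso
    have r1 : C.a + 1 ≤ x.a := LL_real hCx
    have r2 : x.a + 1 ≤ F.a := LL_real hxF
    have r3 : F.a ≤ E.a + 1 := LB_real hFE.1
    have r4 : E.a ≤ C.a + 1 := LB_real hCE.2
    have i1 : F.l < E.r := LB_tie hFE.1 (by linarith)
    have i2 : E.l < C.r := LB_tie hCE.2 (by linarith)
    have i3 : C.r ≤ x.l := LL_tie hCx (by linarith)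
    have i4 : x.r ≤ F.l := LL_tie hxF (by linarith)
    rcases sPE with hPE | hEP
    · have r5 : P0.a + 1 ≤ E.a := LL_real hPE
      have r6 : x.a ≤ P0.a + 1 := LB_real hxP.1
      have i5 : x.l < P0.r := LB_tie hxP.1 (by linarith)
      have i6 : P0.r ≤ E.l := LL_tie hPE (by linarith)
      omega
    · have r5 : E.a + 1 ≤ P0.a := LL_real hEP
      have r6 : P0.a ≤ x.a + 1 := LB_real hxP.2
      have i5 : P0.l < x.r := LB_tie hxP.2 (by linarith)
      have i6 : E.r ≤ P0.l := LL_tie hEP (by linarith)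
      omega
  · exact Or.inr ⟨hCx, hFx⟩

/-- The key core lemma: `A` lies completely to the left of `D`. -/
lemma S5 {A B C D E F G P0 : Iv}
    (hAB : MM A B) (hCB : MM C B) (hCD : MM C D) (hCE : MM C E)
    (hFD : MM F D) (hFE : MM F E) (hFG : MM F G)
    (hBP : MM B P0) (hDP : MM D P0)
    (sAD : SS A D) (sAE : SS A E) (sAG : SS A G) (sCG : SS C G)
    (s2E : LL P0 E) (s2G : LL P0 G) : LL A D := by
  obtain ⟨bAl1, bAl2⟩ := A.hl; obtain ⟨bAr1, bAr2⟩ := A.hr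
  obtain ⟨bBl1, bBl2⟩ := B.hl; obtain ⟨bBr1, bBr2⟩ := B.hr
  obtain ⟨bCl1, bCl2⟩ := C.hl; obtain ⟨bCr1, bCr2⟩ := C.hr
  obtain ⟨bDl1, bDl2⟩ := D.hl; obtain ⟨bDr1, bDr2⟩ := D.hr
  obtain ⟨bEl1, bEl2⟩ := E.hl; obtain ⟨bEr1, bEr2⟩ := E.hr
  obtain ⟨bFl1, bFl2⟩ := F.hl; obtain ⟨bFr1, bFr2⟩ := F.hr
  obtain ⟨bGl1, bGl2⟩ := G.hl; obtain ⟨bGr1, bGr2⟩ := G.hr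
  obtain ⟨bPl1, bPl2⟩ := P0.hl; obtain ⟨bPr1, bPr2⟩ := P0.hr
  rcases sAD with hAD | hDA
  · exact hAD
  exfalso
  have rPE : P0.a + 1 ≤ E.a := LL_real s2E
  have rPG : P0.a + 1 ≤ G.a := LL_real s2G
  have rAB : A.a ≤ B.a + 1 := LB_real hAB.1
  have rBP : B.a ≤ P0.a + 1 := LB_real hBP.1
  have rDP : D.a ≤ P0.a + 1 := LB_real hDP.1
  have rEC : E.a ≤ C.a + 1 := LB_real hCE.2
  have rCD : C.a ≤ D.a + 1 := LB_real hCD.1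
  have rDA : D.a + 1 ≤ A.a := LL_real hDA
  rcases sAE with hAE | hEA
  · rcases sAG with hAG | hGA
    · -- A completely left of both E and G : the tight final configuration
      have rAE : A.a + 1 ≤ E.a := LL_real hAE
      have i1 : E.l < C.r := LB_tie hCE.2 (by linarith)
      have i2 : A.r ≤ E.l := LL_tie hAE (by linarith)
      have i3 : C.l < D.r := LB_tie hCD.1 (by linarith)
      have i4 : D.r ≤ A.l := LL_tie hDA (by linarith)
      have rAG : A.a + 1 ≤ G.a := LL_real hAG
      have rGF : G.a ≤ F.a + 1 := LB_real hFG.2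
      have rFD : F.a ≤ D.a + 1 := LB_real hFD.1
      have eF : F.a = C.a := by linarith
      have i6 : E.l < F.r := LB_tie hFE.2 (by linarith)
      rcases sCG with hCG | hGC
      · have i7 : C.r ≤ G.l := LL_tie hCG (by linarith)
        have i8 : G.l < F.r := LB_tie hFG.2 (by linarith)
        omega
      · have rGC : G.a + 1 ≤ C.a := LL_real hGC
        linarith
    · -- G left of A
      have rGA : G.a + 1 ≤ A.a := LL_real hGA
      have i1 : B.l < P0.r := LB_tie hBP.1 (by linarith)
      have i2 : P0.r ≤ G.l := LL_tie s2G (by linarith)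
      have i3 : G.r ≤ A.l := LL_tie hGA (by linarith)
      have i4 : A.l < B.r := LB_tie hAB.1 (by linarith)
      have rAE : A.a + 1 ≤ E.a := LL_real hAE
      have rCB : C.a ≤ B.a + 1 := LB_real hCB.1
      have i6 : C.l < D.r := LB_tie hCD.1 (by linarith)
      have i7 : D.r ≤ A.l := LL_tie hDA (by linarith)
      omega
  · -- E left of A
    have rEA : E.a + 1 ≤ A.a := LL_real hEA
    have eA : A.a = P0.a + 2 := by linarith
    have eB : B.a = P0.a + 1 := by linarith
    have eE : E.a = P0.a + 1 := by linarith
    have i1 : B.l < P0.r := LB_tie hBP.1 (by linarith)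
    have i2 : P0.r ≤ E.l := LL_tie s2E (by linarith)
    have i3 : E.r ≤ A.l := LL_tie hEA (by linarith)
    have i4 : A.l < B.r := LB_tie hAB.1 (by linarith)
    rcases sAG with hAG | hGA
    · have rAG : A.a + 1 ≤ G.a := LL_real hAG
      have rGF : G.a ≤ F.a + 1 := LB_real hFG.2
      have rFD : F.a ≤ D.a + 1 := LB_real hFD.1
      have i5 : F.l < D.r := LB_tie hFD.1 (by linarith)
      have i6 : D.r ≤ A.l := LL_tie hDA (by linarith)
      omega
    · have rGA : G.a + 1 ≤ A.a := LL_real hGA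
      have eG : G.a = P0.a + 1 := by linarith
      have i5 : P0.r ≤ G.l := LL_tie s2G (by linarith)
      have i6 : G.r ≤ A.l := LL_tie hGA (by linarith)
      rcases sCG with hCG | hGC
      · have rCG : C.a + 1 ≤ G.a := LL_real hCG
        have i7 : E.l < C.r := LB_tie hCE.2 (by linarith)
        have i8 : C.r ≤ G.l := LL_tie hCG (by linarith)
        omega
      · have rGC : G.a + 1 ≤ C.a := LL_real hGC
        have i7 : C.l < D.r := LB_tie hCD.1 (by linarith)
        have i8 : D.r ≤ A.l := LL_tie hDA (by linarith)
        omega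

/-- Main lemma, under the normalization that `x` lies completely to the left
of `C` and of `F`. -/
lemma mainL (n : ℕ) (P LP : ℕ → Iv) (A B C D E F G S1 S2 T1 T2 x y : Iv)
    (hAB : MM A B) (hCB : MM C B) (hCD : MM C D) (hCE : MM C E)
    (hFD : MM F D) (hFE : MM F E) (hFG : MM F G)
    (hBP : MM B (P 0)) (hDP : MM D (P 0))
    (sAD : SS A D) (sAE : SS A E) (sAG : SS A G) (sCG : SS C G)
    (sPE : SS (P 0) E) (sPG : SS (P 0) G)
    (hxP : MM x (P 0)) (sxA : SS x A) (hxy : MM x y) (syB : SS y B)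
    (hPP : ∀ k, k + 1 ≤ n → MM (P k) (P (k+1)))
    (hPL : ∀ k, k + 1 ≤ n → MM (P k) (LP k))
    (cP : ∀ k, k + 1 ≤ n → Cond A C LP k (P (k+1)))
    (cL : ∀ k, k + 1 ≤ n → Cond A C LP k (LP k))
    (cS1 : Cond A C LP n S1) (cS2 : Cond A C LP n S2)
    (hS1 : MM S1 (P n)) (hS2 : MM S2 (P n))
    (hST1 : MM S1 T1) (hST2 : MM S2 T2) (sT1 : SS T1 S2) (sT2 : SS T2 S1)
    (hLC : LL x C) (hLF : LL x F) : False := by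
  obtain ⟨bAl1, bAl2⟩ := A.hl; obtain ⟨bAr1, bAr2⟩ := A.hr
  obtain ⟨bBl1, bBl2⟩ := B.hl; obtain ⟨bBr1, bBr2⟩ := B.hr
  obtain ⟨bCl1, bCl2⟩ := C.hl; obtain ⟨bCr1, bCr2⟩ := C.hr
  obtain ⟨bDl1, bDl2⟩ := D.hl; obtain ⟨bDr1, bDr2⟩ := D.hr
  obtain ⟨bPl1, bPl2⟩ := (P 0).hl; obtain ⟨bPr1, bPr2⟩ := (P 0).hr
  obtain ⟨bxl1, bxl2⟩ := x.hl; obtain ⟨bxr1, bxr2⟩ := x.hr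
  have s2E : LL (P 0) E := by
    rcases sPE with h | h
    · exact h
    · exact (cycle4 hCE.1 h hxP.2 hLC).elim
  have s2G : LL (P 0) G := by
    rcases sPG with h | h
    · exact h
    · exact (cycle4 hFG.1 h hxP.2 hLF).elim
  have s3B : LL y B := by
    rcases syB with h | h
    · exact h
    · exact (cycle4 hCB.1 h hxy.2 hLC).elim
  have s4 : LL x A := by
    rcases sxA with h | h
    · exact h
    · exact (cycle4 hAB.2 h hxy.1 s3B).elim
  have s5 : LL A D := S5 hAB hCB hCD hCE hFD hFE hFG hBP hDP sAD sAE sAG sCG s2E s2G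
  -- pin the base configuration
  have rAD : A.a + 1 ≤ D.a := LL_real s5
  have rxA : x.a + 1 ≤ A.a := LL_real s4
  have rPx : (P 0).a ≤ x.a + 1 := LB_real hxP.2
  have rDP : D.a ≤ (P 0).a + 1 := LB_real hDP.1
  have eD : D.a = (P 0).a + 1 := by linarith
  have eA : A.a = (P 0).a := by linarith
  have iDP : D.l < (P 0).r := LB_tie hDP.1 (by linarith)
  have iAD : A.r ≤ D.l := LL_tie s5 (by linarith)
  have ixA : x.r ≤ A.l := LL_tie s4 (by linarith)
  have iPx : (P 0).l < x.r := LB_tie hxP.2 (by linarith)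
  have hP0l : (P 0).l = 0 := by omega
  have hP0r : (P 0).r = 1 := by omega
  have hAl : A.l = 1 := by omega
  have hAr : A.r = 0 := by omega
  have hDl : D.l = 0 := by omega
  -- the pinned "follower" property at stage 0
  have fp0 : ∀ X : Iv, MM X (P 0) → SS X A → SS X C → X.a + 1 = (P 0).a ∧ X.r = 1 := by
    intro X hXP sXA sXC
    obtain ⟨bXl1, bXl2⟩ := X.hl; obtain ⟨bXr1, bXr2⟩ := X.hr
    rcases sXA with hXA | hAX
    · have r1 : X.a + 1 ≤ A.a := LL_real hXA
      have r2 : (P 0).a ≤ X.a + 1 := LB_real hXP.2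
      have e1 : X.a + 1 = (P 0).a := by linarith
      refine ⟨e1, ?_⟩
      have i1 : (P 0).l < X.r := LB_tie hXP.2 (by linarith)
      omega
    · exfalso
      have r1 : A.a + 1 ≤ X.a := LL_real hAX
      have r2 : X.a ≤ (P 0).a + 1 := LB_real hXP.1
      have eX : X.a = (P 0).a + 1 := by linarith
      rcases sXC with hXC | hCX
      · have r3 : X.a + 1 ≤ C.a := LL_real hXC
        have r4 : C.a ≤ B.a + 1 := LB_real hCB.1
        have r5 : B.a ≤ A.a + 1 := LB_real hAB.2
        have i1 : B.l < A.r := LB_tie hAB.2 (by linarith)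
        omega
      · have r3 : C.a + 1 ≤ X.a := LL_real hCX
        have r4 : D.a ≤ C.a + 1 := LB_real hCD.2
        have i1 : D.l < C.r := LB_tie hCD.2 (by linarith)
        have i2 : C.r ≤ X.l := LL_tie hCX (by linarith)
        have i3 : X.l < (P 0).r := LB_tie hXP.1 (by linarith)
        omega
  -- the inductive invariant along the path
  have stat : ∀ k, k ≤ n →
      (P k).a = (P 0).a - k ∧ (P k).l = 0 ∧ (P k).r = 1 ∧
      (∀ X : Iv, MM X (P k) → Cond A C LP k X → X.a + 1 = (P 0).a - k ∧ X.r = 1) := by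
    intro k
    induction k with
    | zero =>
      intro _
      refine ⟨by norm_num, hP0l, hP0r, ?_⟩
      intro X h1 h2
      obtain ⟨e1, f1⟩ := fp0 X h1 h2.1 h2.2
      exact ⟨by push_cast; linarith, f1⟩
    | succ k ih =>
      intro hk
      obtain ⟨ihA, ihl, ihr, ihF⟩ := ih (by omega)
      obtain ⟨e1, f1⟩ := ihF (P (k+1)) (MM_symm (hPP k hk)) (cP k hk)
      obtain ⟨e2, f2⟩ := ihF (LP k) (MM_symm (hPL k hk)) (cL k hk)
      have hX' : ∃ X' : Iv, MM X' (P (k+1)) ∧ SS X' (LP k) := by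
        by_cases h2 : k + 2 ≤ n
        · exact ⟨P (k+2), MM_symm (hPP (k+1) h2), cP (k+1) h2⟩
        · have hn : k + 1 = n := by omega
          subst hn
          exact ⟨S1, hS1, cS1⟩
      obtain ⟨X', hX'M, hX'S⟩ := hX'
      obtain ⟨bYl1, bYl2⟩ := X'.hl; obtain ⟨bYr1, bYr2⟩ := X'.hr
      obtain ⟨bQl1, bQl2⟩ := (P (k+1)).hl; obtain ⟨bQr1, bQr2⟩ := (P (k+1)).hr
      obtain ⟨bLl1, bLl2⟩ := (LP k).hl; obtain ⟨bLr1, bLr2⟩ := (LP k).hr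
      have eLP : (LP k).a = (P (k+1)).a := by linarith
      rcases hX'S with hXa | hXb
      · have r1 : X'.a + 1 ≤ (LP k).a := LL_real hXa
        have r2 : (P (k+1)).a ≤ X'.a + 1 := LB_real hX'M.2
        have i1 : (P (k+1)).l < X'.r := LB_tie hX'M.2 (by linarith)
        have i2 : X'.r ≤ (LP k).l := LL_tie hXa (by linarith)
        have hl1 : (P (k+1)).l = 0 := by omega
        have hl2 : (LP k).l = 1 := by omega
        refine ⟨by push_cast; linarith, hl1, f1, ?_⟩
        intro X hXM hXC
        obtain ⟨bXl1, bXl2⟩ := X.hl; obtain ⟨bXr1, bXr2⟩ := X.hr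
        have hXC' : SS X (LP k) := hXC
        rcases hXC' with h | h
        · have r3 : X.a + 1 ≤ (LP k).a := LL_real h
          have r4 : (P (k+1)).a ≤ X.a + 1 := LB_real hXM.2
          refine ⟨by push_cast; linarith, ?_⟩
          have i3 : (P (k+1)).l < X.r := LB_tie hXM.2 (by linarith)
          omega
        · exfalso
          have r3 : (LP k).a + 1 ≤ X.a := LL_real h
          have r4 : X.a ≤ (P (k+1)).a + 1 := LB_real hXM.1
          have i3 : X.l < (P (k+1)).r := LB_tie hXM.1 (by linarith)
          have i4 : (LP k).r ≤ X.l := LL_tie h (by linarith)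
          omega
      · exfalso
        have r1 : (LP k).a + 1 ≤ X'.a := LL_real hXb
        have r2 : X'.a ≤ (P (k+1)).a + 1 := LB_real hX'M.1
        have i1 : X'.l < (P (k+1)).r := LB_tie hX'M.1 (by linarith)
        have i2 : (LP k).r ≤ X'.l := LL_tie hXb (by linarith)
        omega
  -- the fork at the end of the path
  obtain ⟨snA, snl, snr, snF⟩ := stat n le_rfl
  obtain ⟨eS1, fS1⟩ := snF S1 hS1 cS1
  obtain ⟨eS2, fS2⟩ := snF S2 hS2 cS2
  obtain ⟨b1l1, b1l2⟩ := S1.hl; obtain ⟨b1r1, b1r2⟩ := S1.hr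
  obtain ⟨b2l1, b2l2⟩ := S2.hl; obtain ⟨b2r1, b2r2⟩ := S2.hr
  obtain ⟨bt1l1, bt1l2⟩ := T1.hl; obtain ⟨bt1r1, bt1r2⟩ := T1.hr
  obtain ⟨bt2l1, bt2l2⟩ := T2.hl; obtain ⟨bt2r1, bt2r2⟩ := T2.hr
  have eSS : S1.a = S2.a := by linarith
  have key1 : S1.l < S2.l := by
    rcases sT1 with h | h
    · have r1 : T1.a + 1 ≤ S2.a := LL_real h
      have r2 : S1.a ≤ T1.a + 1 := LB_real hST1.1
      have i1 : S1.l < T1.r := LB_tie hST1.1 (by linarith)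
      have i2 : T1.r ≤ S2.l := LL_tie h (by linarith)
      omega
    · exfalso
      have r1 : S2.a + 1 ≤ T1.a := LL_real h
      have r2 : T1.a ≤ S1.a + 1 := LB_real hST1.2
      have i1 : T1.l < S1.r := LB_tie hST1.2 (by linarith)
      have i2 : S2.r ≤ T1.l := LL_tie h (by linarith)
      omega
  have key2 : S2.l < S1.l := by
    rcases sT2 with h | h
    · have r1 : T2.a + 1 ≤ S1.a := LL_real h
      have r2 : S2.a ≤ T2.a + 1 := LB_real hST2.1
      have i1 : S2.l < T2.r := LB_tie hST2.1 (by linarith)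
      have i2 : T2.r ≤ S1.l := LL_tie h (by linarith)
      omega
    · exfalso
      have r1 : S1.a + 1 ≤ T2.a := LL_real h
      have r2 : T2.a ≤ S2.a + 1 := LB_real hST2.2
      have i1 : T2.l < S2.r := LB_tie hST2.2 (by linarith)
      have i2 : S1.r ≤ T2.l := LL_tie h (by linarith)
      omega
  omega

/-- Main abstract lemma (no normalization assumption). -/
lemma mainAbs (n : ℕ) (P LP : ℕ → Iv) (A B C D E F G S1 S2 T1 T2 x y : Iv)
    (hAB : MM A B) (hCB : MM C B) (hCD : MM C D) (hCE : MM C E)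
    (hFD : MM F D) (hFE : MM F E) (hFG : MM F G)
    (hBP : MM B (P 0)) (hDP : MM D (P 0))
    (sAD : SS A D) (sAE : SS A E) (sAG : SS A G) (sCG : SS C G)
    (sPE : SS (P 0) E) (sPG : SS (P 0) G)
    (hxP : MM x (P 0)) (sxA : SS x A) (sxC : SS x C) (sxF : SS x F)
    (hxy : MM x y) (syB : SS y B)
    (hPP : ∀ k, k + 1 ≤ n → MM (P k) (P (k+1)))
    (hPL : ∀ k, k + 1 ≤ n → MM (P k) (LP k))
    (cP : ∀ k, k + 1 ≤ n → Cond A C LP k (P (k+1)))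
    (cL : ∀ k, k + 1 ≤ n → Cond A C LP k (LP k))
    (cS1 : Cond A C LP n S1) (cS2 : Cond A C LP n S2)
    (hS1 : MM S1 (P n)) (hS2 : MM S2 (P n))
    (hST1 : MM S1 T1) (hST2 : MM S2 T2) (sT1 : SS T1 S2) (sT2 : SS T2 S1) :
    False := by
  rcases lemma0 hCE hFE hxP sPE sxC sxF with ⟨hLC, hLF⟩ | ⟨hRC, hRF⟩
  · exact mainL n P LP A B C D E F G S1 S2 T1 T2 x y hAB hCB hCD hCE hFD hFE hFG
      hBP hDP sAD sAE sAG sCG sPE sPG hxP sxA hxy syB hPP hPL cP cL cS1 cS2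
      hS1 hS2 hST1 hST2 sT1 sT2 hLC hLF
  · -- apply the normalized lemma to the mirrored configuration
    have mCond : ∀ (W : Iv) (k : ℕ) (X : Iv),
        Cond W C LP k X → Cond (mir W) (mir C) (fun j => mir (LP j)) k (mir X) := by
      intro W k X h
      match k with
      | 0 => exact ⟨mir_SS.mpr h.1, mir_SS.mpr h.2⟩
      | (k+1) => exact mir_SS.mpr h
    exact mainL n (fun k => mir (P k)) (fun k => mir (LP k))
      (mir A) (mir B) (mir C) (mir D) (mir E) (mir F) (mir G)
      (mir S1) (mir S2) (mir T1) (mir T2) (mir x) (mir y)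
      (mir_MM.mpr hAB) (mir_MM.mpr hCB) (mir_MM.mpr hCD) (mir_MM.mpr hCE)
      (mir_MM.mpr hFD) (mir_MM.mpr hFE) (mir_MM.mpr hFG)
      (mir_MM.mpr hBP) (mir_MM.mpr hDP)
      (mir_SS.mpr sAD) (mir_SS.mpr sAE) (mir_SS.mpr sAG) (mir_SS.mpr sCG)
      (mir_SS.mpr sPE) (mir_SS.mpr sPG)
      (mir_MM.mpr hxP) (mir_SS.mpr sxA) (mir_MM.mpr hxy) (mir_SS.mpr syB)
      (fun k hk => mir_MM.mpr (hPP k hk)) (fun k hk => mir_MM.mpr (hPL k hk))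
      (fun k hk => mCond A k (P (k+1)) (cP k hk))
      (fun k hk => mCond A k (LP k) (cL k hk))
      (mCond A n S1 cS1) (mCond A n S2 cS2)
      (mir_MM.mpr hS1) (mir_MM.mpr hS2)
      (mir_MM.mpr hST1) (mir_MM.mpr hST2) (mir_SS.mpr sT1) (mir_SS.mpr sT2)
      (mir_LL.mpr hRC) (mir_LL.mpr hRF)

/-- The path vertices of `P_i`, as a total function. -/
def Pfun (i : ℕ) (iv : PVert i → Iv) : ℕ → Iv :=
  fun k => if h : k < i then iv (.p ⟨k, h⟩) else iv .vA

/-- The leaf vertices of `P_i`, as a total function. -/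
def LPfun (i : ℕ) (iv : PVert i → Iv) : ℕ → Iv :=
  fun k => if h : k < i - 1 then iv (.lp ⟨k, h⟩) else iv .vA

lemma Pfun_eq {i : ℕ} (iv : PVert i → Iv) {k : ℕ} (h : k < i) :
    Pfun i iv k = iv (.p ⟨k, h⟩) := dif_pos h

lemma LPfun_eq {i : ℕ} (iv : PVert i → Iv) {k : ℕ} (h : k < i - 1) :
    LPfun i iv k = iv (.lp ⟨k, h⟩) := dif_pos h

theorem Pi_not_U_bigraph_aux (i : ℕ) (hi : 1 ≤ i) :
    ¬ IsUBigraph (PColor i) (PAdj i) := by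
  obtain ⟨n, rfl⟩ : ∃ n, i = n + 1 := ⟨i - 1, by omega⟩
  rintro ⟨f, hfam, hiff⟩
  classical
  have hex : ∀ v, ∃ u : Iv, f v = gs u.a u.l u.r := fun v => unit_to_gs (hfam v)
  choose iv hiv using hex
  have hM : ∀ u v, PColor (n+1) u ≠ PColor (n+1) v → PAdj (n+1) u v → MM (iv u) (iv v) := by
    intro u v hc ha
    have h1 := (hiff u v hc).mp ha
    rw [hiv u, hiv v] at h1
    exact (gs_inter _ _).mp h1
  have hS : ∀ u v, PColor (n+1) u ≠ PColor (n+1) v → ¬ PAdj (n+1) u v → SS (iv u) (iv v) := by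
    intro u v hc ha
    have h1 : ¬ (f u ∩ f v).Nonempty := fun hne => ha ((hiff u v hc).mpr hne)
    rw [hiv u, hiv v] at h1
    exact not_MM.mp (fun hmm => h1 ((gs_inter _ _).mpr hmm))
  -- core adjacencies
  have hAB : MM (iv .vA) (iv .vB) := hM .vA .vB (by simp [PColor]) (Or.inl trivial)
  have hCB : MM (iv .vC) (iv .vB) := hM .vC .vB (by simp [PColor]) (Or.inl trivial)
  have hCD : MM (iv .vC) (iv .vD) := hM .vC .vD (by simp [PColor]) (Or.inl trivial)
  have hCE : MM (iv .vC) (iv .vE) := hM .vC .vE (by simp [PColor]) (Or.inl trivial)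
  have hFD : MM (iv .vF) (iv .vD) := hM .vF .vD (by simp [PColor]) (Or.inl trivial)
  have hFE : MM (iv .vF) (iv .vE) := hM .vF .vE (by simp [PColor]) (Or.inl trivial)
  have hFG : MM (iv .vF) (iv .vG) := hM .vF .vG (by simp [PColor]) (Or.inl trivial)
  have hBP : MM (iv .vB) (Pfun (n+1) iv 0) := by
    rw [Pfun_eq iv (show 0 < n + 1 by omega)]
    exact hM .vB (.p ⟨0, by omega⟩) (by simp [PColor]) (Or.inl rfl)
  have hDP : MM (iv .vD) (Pfun (n+1) iv 0) := by
    rw [Pfun_eq iv (show 0 < n + 1 by omega)]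
    exact hM .vD (.p ⟨0, by omega⟩) (by simp [PColor]) (Or.inl rfl)
  -- core separations
  have noadj : ∀ u v : PVert (n+1), (PR (n+1) u v → False) → (PR (n+1) v u → False) →
      ¬ PAdj (n+1) u v := by
    intro u v h1 h2 h
    rcases h with h | h
    · exact h1 h
    · exact h2 h
  have sAD : SS (iv .vA) (iv .vD) := hS .vA .vD (by simp [PColor]) (noadj _ _ False.elim False.elim)
  have sAE : SS (iv .vA) (iv .vE) := hS .vA .vE (by simp [PColor]) (noadj _ _ False.elim False.elim)
  have sAG : SS (iv .vA) (iv .vG) := hS .vA .vG (by simp [PColor]) (noadj _ _ False.elim False.elim)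
  have sCG : SS (iv .vC) (iv .vG) := hS .vC .vG (by simp [PColor]) (noadj _ _ False.elim False.elim)
  have sPE : SS (Pfun (n+1) iv 0) (iv .vE) := by
    rw [Pfun_eq iv (show 0 < n + 1 by omega)]
    exact hS (.p ⟨0, by omega⟩) .vE (by simp [PColor]) (noadj _ _ False.elim False.elim)
  have sPG : SS (Pfun (n+1) iv 0) (iv .vG) := by
    rw [Pfun_eq iv (show 0 < n + 1 by omega)]
    exact hS (.p ⟨0, by omega⟩) .vG (by simp [PColor]) (noadj _ _ False.elim False.elim)
  -- path adjacencies
  have hPP : ∀ k, k + 1 ≤ n → MM (Pfun (n+1) iv k) (Pfun (n+1) iv (k+1)) := by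
    intro k hk
    rw [Pfun_eq iv (show k < n + 1 by omega), Pfun_eq iv (show k + 1 < n + 1 by omega)]
    refine hM (.p ⟨k, by omega⟩) (.p ⟨k+1, by omega⟩) ?_ (Or.inl rfl)
    simp only [PColor, ne_eq, decide_eq_decide]
    omega
  have hPL : ∀ k, k + 1 ≤ n → MM (Pfun (n+1) iv k) (LPfun (n+1) iv k) := by
    intro k hk
    rw [Pfun_eq iv (show k < n + 1 by omega), LPfun_eq iv (show k < n + 1 - 1 by omega)]
    refine hM (.p ⟨k, by omega⟩) (.lp ⟨k, by omega⟩) ?_ (Or.inl rfl)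
    simp only [PColor, ne_eq, decide_eq_decide]
    omega
  -- follower separations
  have cP : ∀ k, k + 1 ≤ n → Cond (iv .vA) (iv .vC) (LPfun (n+1) iv) k (Pfun (n+1) iv (k+1)) := by
    intro k hk
    match k with
    | 0 =>
      rw [show Pfun (n+1) iv 1 = iv (.p ⟨1, by omega⟩) from Pfun_eq iv (by omega)]
      constructor
      · refine hS (.p ⟨1, by omega⟩) .vA ?_ (noadj _ _ False.elim False.elim)
        simp [PColor]
      · refine hS (.p ⟨1, by omega⟩) .vC ?_ (noadj _ _ False.elim False.elim)
        simp [PColor]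
    | (m+1) =>
      show SS (Pfun (n+1) iv (m+2)) (LPfun (n+1) iv m)
      rw [Pfun_eq iv (show m + 2 < n + 1 by omega), LPfun_eq iv (show m < n + 1 - 1 by omega)]
      refine hS (.p ⟨m+2, by omega⟩) (.lp ⟨m, by omega⟩) ?_ ?_
      · simp only [PColor, ne_eq, decide_eq_decide]
        omega
      · refine noadj _ _ (fun h => ?_) False.elim
        have h' : m + 2 = m := h
        omega
  have cL : ∀ k, k + 1 ≤ n → Cond (iv .vA) (iv .vC) (LPfun (n+1) iv) k (LPfun (n+1) iv k) := by
    intro k hk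
    match k with
    | 0 =>
      rw [show LPfun (n+1) iv 0 = iv (.lp ⟨0, by omega⟩) from LPfun_eq iv (by omega)]
      constructor
      · refine hS (.lp ⟨0, by omega⟩) .vA ?_ (noadj _ _ False.elim False.elim)
        simp [PColor]
      · refine hS (.lp ⟨0, by omega⟩) .vC ?_ (noadj _ _ False.elim False.elim)
        simp [PColor]
    | (m+1) =>
      show SS (LPfun (n+1) iv (m+1)) (LPfun (n+1) iv m)
      rw [LPfun_eq iv (show m + 1 < n + 1 - 1 by omega), LPfun_eq iv (show m < n + 1 - 1 by omega)]
      refine hS (.lp ⟨m+1, by omega⟩) (.lp ⟨m, by omega⟩) ?_ (noadj _ _ False.elim False.elim)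
      simp only [PColor, ne_eq, decide_eq_decide]
      omega
  -- fork vertices
  have hS1 : MM (iv .s1) (Pfun (n+1) iv n) := by
    rw [Pfun_eq iv (show n < n + 1 by omega)]
    refine hM .s1 (.p ⟨n, by omega⟩) ?_ (Or.inr rfl)
    simp only [PColor, ne_eq, decide_eq_decide]
    omega
  have hS2 : MM (iv .s2) (Pfun (n+1) iv n) := by
    rw [Pfun_eq iv (show n < n + 1 by omega)]
    refine hM .s2 (.p ⟨n, by omega⟩) ?_ (Or.inr rfl)
    simp only [PColor, ne_eq, decide_eq_decide]
    omega
  have cS1 : Cond (iv .vA) (iv .vC) (LPfun (n+1) iv) n (iv .s1) := by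
    obtain hnn | ⟨m, hnn⟩ : n = 0 ∨ ∃ m, n = m + 1 := by
      rcases n with _ | m
      · exact Or.inl rfl
      · exact Or.inr ⟨m, rfl⟩
    · subst hnn
      constructor
      · refine hS .s1 .vA ?_ (noadj _ _ False.elim False.elim)
        simp only [PColor, ne_eq, decide_eq_true_iff]
        omega
      · refine hS .s1 .vC ?_ (noadj _ _ False.elim False.elim)
        simp only [PColor, ne_eq, decide_eq_true_iff]
        omega
    · subst hnn
      show SS (iv .s1) (LPfun (m+1+1) iv m)
      rw [LPfun_eq iv (show m < m + 1 + 1 - 1 by omega)]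
      refine hS .s1 (.lp ⟨m, by omega⟩) ?_ (noadj _ _ False.elim False.elim)
      simp only [PColor, ne_eq, decide_eq_decide]
      omega
  have cS2 : Cond (iv .vA) (iv .vC) (LPfun (n+1) iv) n (iv .s2) := by
    obtain hnn | ⟨m, hnn⟩ : n = 0 ∨ ∃ m, n = m + 1 := by
      rcases n with _ | m
      · exact Or.inl rfl
      · exact Or.inr ⟨m, rfl⟩
    · subst hnn
      constructor
      · refine hS .s2 .vA ?_ (noadj _ _ False.elim False.elim)
        simp only [PColor, ne_eq, decide_eq_true_iff]
        omega
      · refine hS .s2 .vC ?_ (noadj _ _ False.elim False.elim)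
        simp only [PColor, ne_eq, decide_eq_true_iff]
        omega
    · subst hnn
      show SS (iv .s2) (LPfun (m+1+1) iv m)
      rw [LPfun_eq iv (show m < m + 1 + 1 - 1 by omega)]
      refine hS .s2 (.lp ⟨m, by omega⟩) ?_ (noadj _ _ False.elim False.elim)
      simp only [PColor, ne_eq, decide_eq_decide]
      omega
  have hST1 : MM (iv .s1) (iv .t1) := by
    refine hM .s1 .t1 ?_ (Or.inl trivial)
    simp only [PColor, ne_eq, decide_eq_decide]
    omega
  have hST2 : MM (iv .s2) (iv .t2) := by
    refine hM .s2 .t2 ?_ (Or.inl trivial)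
    simp only [PColor, ne_eq, decide_eq_decide]
    omega
  have sT1 : SS (iv .t1) (iv .s2) := by
    refine hS .t1 .s2 ?_ (noadj _ _ False.elim False.elim)
    simp only [PColor, ne_eq, decide_eq_decide]
    omega
  have sT2 : SS (iv .t2) (iv .s1) := by
    refine hS .t2 .s1 ?_ (noadj _ _ False.elim False.elim)
    simp only [PColor, ne_eq, decide_eq_decide]
    omega
  -- choose the tail vertices x and y and conclude
  rcases n with _ | m
  · -- i = 1 : x = s1, y = t1
    have sxF : SS (iv .s1) (iv .vF) := by
      refine hS .s1 .vF ?_ (noadj _ _ False.elim False.elim)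
      simp only [PColor, ne_eq, decide_eq_true_iff]
      omega
    have syB : SS (iv .t1) (iv .vB) := by
      refine hS .t1 .vB ?_ (noadj _ _ False.elim False.elim)
      simp [PColor]
    exact mainAbs 0 (Pfun 1 iv) (LPfun 1 iv) (iv .vA) (iv .vB) (iv .vC) (iv .vD)
      (iv .vE) (iv .vF) (iv .vG) (iv .s1) (iv .s2) (iv .t1) (iv .t2) (iv .s1) (iv .t1)
      hAB hCB hCD hCE hFD hFE hFG hBP hDP sAD sAE sAG sCG sPE sPG
      hS1 cS1.1 cS1.2 sxF hST1 syB hPP hPL cP cL cS1 cS2 hS1 hS2 hST1 hST2 sT1 sT2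
  · -- i ≥ 2 : x = p 1
    have hxP : MM (Pfun (m+1+1) iv 1) (Pfun (m+1+1) iv 0) := MM_symm (hPP 0 (by omega))
    have sxA : SS (Pfun (m+1+1) iv 1) (iv .vA) := (cP 0 (by omega)).1
    have sxC : SS (Pfun (m+1+1) iv 1) (iv .vC) := (cP 0 (by omega)).2
    have sxF : SS (Pfun (m+1+1) iv 1) (iv .vF) := by
      rw [Pfun_eq iv (show 1 < m + 1 + 1 by omega)]
      exact hS (.p ⟨1, by omega⟩) .vF (by simp [PColor]) (noadj _ _ False.elim False.elim)
    rcases m with _ | k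
    · -- i = 2 : y = s1
      have syB : SS (iv .s1) (iv .vB) := by
        refine hS .s1 .vB ?_ (noadj _ _ False.elim False.elim)
        simp [PColor]
      exact mainAbs 1 (Pfun 2 iv) (LPfun 2 iv) (iv .vA) (iv .vB) (iv .vC) (iv .vD)
        (iv .vE) (iv .vF) (iv .vG) (iv .s1) (iv .s2) (iv .t1) (iv .t2)
        (Pfun 2 iv 1) (iv .s1)
        hAB hCB hCD hCE hFD hFE hFG hBP hDP sAD sAE sAG sCG sPE sPG
        hxP sxA sxC sxF (MM_symm hS1) syB hPP hPL cP cL cS1 cS2 hS1 hS2 hST1 hST2 sT1 sT2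
    · -- i ≥ 3 : y = p 2
      have hxy : MM (Pfun (k+1+1+1) iv 1) (Pfun (k+1+1+1) iv 2) := hPP 1 (by omega)
      have syB : SS (Pfun (k+1+1+1) iv 2) (iv .vB) := by
        rw [Pfun_eq iv (show 2 < k + 1 + 1 + 1 by omega)]
        refine hS (.p ⟨2, by omega⟩) .vB (by simp [PColor]) ?_
        refine noadj _ _ False.elim ?_
        intro h
        have h' : (2 : ℕ) = 0 := h
        omega
      exact mainAbs (k+1+1) (Pfun (k+1+1+1) iv) (LPfun (k+1+1+1) iv) (iv .vA) (iv .vB)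
        (iv .vC) (iv .vD) (iv .vE) (iv .vF) (iv .vG) (iv .s1) (iv .s2) (iv .t1) (iv .t2)
        (Pfun (k+1+1+1) iv 1) (Pfun (k+1+1+1) iv 2)
        hAB hCB hCD hCE hFD hFE hFG hBP hDP sAD sAE sAG sCG sPE sPG
        hxP sxA sxC sxF hxy syB hPP hPL cP cL cS1 cS2 hS1 hS2 hST1 hST2 sT1 sT2

/-- For every `i ≥ 1`, `P_i` is not a mixed unit interval bigraph. -/
theorem Pi_not_U_bigraph (i : ℕ) (hi : 1 ≤ i) :
    ¬ IsUBigraph (PColor i) (PAdj i) := Pi_not_U_bigraph_aux i hi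
end

section
/- For every integer i ≥ 1, the bigraph S_i is not a 𝓤-bigraph; that is, S_i admits no intersection representation by unit intervals of the four types (closed, open, closed-open, open-closed). -/
/-- The vertices of the bigraph `S_i`: a vertex `x` with attached paths `x–y₀–x₀`
and `x–y'–x'` of length 2; vertices `y₁', x₁''` and a path `q₁–⋯–q_i` (`q k` is
`q_{k+1}`) such that `x, y₁', x₁'', q₁` form a four-cycle (edges
`xy₁', y₁'x₁'', x₁''q₁, xq₁`); a pendant leaf `lq k` at `q_{k+1}` for `k+1 ≤ i-1`;
and two vertex-disjoint paths `q_i–s1–t1`, `q_i–s2–t2` of length 2 at `q_i`. -/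
inductive SVert (i : ℕ) : Type
  | x | y0 | x0 | y' | x' | y1' | x1''
  | q (k : Fin i)
  | lq (k : Fin (i - 1))
  | s1 | t1 | s2 | t2

/-- One orientation of each edge of `S_i`. -/
def SR (i : ℕ) : SVert i → SVert i → Prop
  | .x, .y0 => True
  | .y0, .x0 => True
  | .x, .y' => True
  | .y', .x' => True
  | .x, .y1' => True
  | .y1', .x1'' => True
  | .x1'', .q k => k.val = 0
  | .x, .q k => k.val = 0
  | .q k, .q m => m.val = k.val + 1
  | .q k, .lq m => k.val = m.val
  | .q k, .s1 => k.val + 1 = i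
  | .q k, .s2 => k.val + 1 = i
  | .s1, .t1 => True
  | .s2, .t2 => True
  | _, _ => False

/-- The (symmetric) adjacency relation of `S_i`. -/
def SAdj (i : ℕ) (u v : SVert i) : Prop := SR i u v ∨ SR i v u

/-- The proper 2-coloring of `S_i` (`x` in the class `true = X`). -/
def SColor (i : ℕ) : SVert i → Bool
  | .x => true
  | .y0 => false
  | .x0 => true
  | .y' => false
  | .x' => true
  | .y1' => false
  | .x1'' => true
  | .q k => decide (k.val % 2 = 1)
  | .lq k => decide (k.val % 2 = 0)
  | .s1 => decide ((i - 1) % 2 = 0)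
  | .t1 => decide ((i - 1) % 2 = 1)
  | .s2 => decide ((i - 1) % 2 = 0)
  | .t2 => decide ((i - 1) % 2 = 1)


def Mt (aU : ℝ) (lU rU : Prop) (aV : ℝ) (lV rV : Prop) : Prop :=
  (aV < aU + 1 ∨ (aV = aU + 1 ∧ rU ∧ lV)) ∧ (aU < aV + 1 ∨ (aU = aV + 1 ∧ rV ∧ lU))

def Lft (aU : ℝ) (rU : Prop) (aV : ℝ) (lV : Prop) : Prop :=
  aU + 1 < aV ∨ (aV = aU + 1 ∧ ¬(rU ∧ lV))

lemma mt_le1 {aU lU rU aV lV rV} (h : Mt aU lU rU aV lV rV) : aV ≤ aU + 1 := by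
  rcases h.1 with h1 | h1
  · linarith
  · linarith [h1.1.le]

lemma mt_le2 {aU lU rU aV lV rV} (h : Mt aU lU rU aV lV rV) : aU ≤ aV + 1 := by
  rcases h.2 with h1 | h1
  · linarith
  · linarith [h1.1.le]

lemma mt_touch1 {aU lU rU aV lV rV} (h : Mt aU lU rU aV lV rV) (he : aV = aU + 1) :
    rU ∧ lV := by
  rcases h.1 with h1 | h1
  · exfalso; linarith
  · exact h1.2

lemma mt_touch2 {aU lU rU aV lV rV} (h : Mt aU lU rU aV lV rV) (he : aU = aV + 1) :
    rV ∧ lU := by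
  rcases h.2 with h1 | h1
  · exfalso; linarith
  · exact h1.2

lemma mt_symm {aU lU rU aV lV rV} (h : Mt aU lU rU aV lV rV) : Mt aV lV rV aU lU rU :=
  ⟨h.2, h.1⟩

lemma lft_le {aU rU aV lV} (h : Lft aU rU aV lV) : aU + 1 ≤ aV := by
  rcases h with h | h
  · linarith
  · linarith [h.1.ge]

lemma lft_touch {aU rU aV lV} (h : Lft aU rU aV lV) (he : aV = aU + 1) : ¬(rU ∧ lV) := by
  rcases h with h | h
  · exfalso; linarith
  · exact h.2

lemma nmt {aU lU rU aV lV rV} (h : ¬ Mt aU lU rU aV lV rV) :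
    Lft aU rU aV lV ∨ Lft aV rV aU lU := by
  by_contra hc
  push_neg at hc
  apply h
  constructor
  · rcases lt_trichotomy aV (aU + 1) with h1 | h1 | h1
    · exact Or.inl h1
    · refine Or.inr ⟨h1, ?_⟩
      by_contra hrl
      exact hc.1 (Or.inr ⟨h1, hrl⟩)
    · exact absurd (Or.inl h1) hc.1
  · rcases lt_trichotomy aU (aV + 1) with h1 | h1 | h1
    · exact Or.inl h1
    · refine Or.inr ⟨h1, ?_⟩
      by_contra hrl
      exact hc.2 (Or.inr ⟨h1, hrl⟩)
    · exact absurd (Or.inl h1) hc.2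

lemma mt_open {aU lU rU aV lV rV} (h : Mt aU lU rU aV lV rV) (hl : ¬ lU) (hr : ¬ rU) :
    aV < aU + 1 ∧ aU < aV + 1 := by
  constructor
  · rcases h.1 with h1 | h1
    · exact h1
    · exact absurd h1.2.1 hr
  · rcases h.2 with h1 | h1
    · exact h1
    · exact absurd h1.2.2 hl

lemma mt_mirror {aU lU rU aV lV rV : _} {aU' aV' : ℝ} (hU : aU' = -1 - aU) (hV : aV' = -1 - aV)
    (h : Mt aU lU rU aV lV rV) : Mt aU' rU lU aV' rV lV := by
  subst hU; subst hV
  obtain ⟨h1, h2⟩ := h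
  constructor
  · rcases h2 with h | ⟨he, h⟩
    · exact Or.inl (by linarith)
    · exact Or.inr ⟨by linarith, h.2, h.1⟩
  · rcases h1 with h | ⟨he, h⟩
    · exact Or.inl (by linarith)
    · exact Or.inr ⟨by linarith, h.2, h.1⟩

lemma nmt_mirror {aU lU rU aV lV rV : _} {aU' aV' : ℝ} (hU : aU' = -1 - aU) (hV : aV' = -1 - aV)
    (h : ¬ Mt aU lU rU aV lV rV) : ¬ Mt aU' rU lU aV' rV lV := by
  intro hm
  apply h
  have := mt_mirror (aU := aU') (aV := aV') (lU := rU) (rU := lU) (lV := rV) (rV := lV)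
    (aU' := aU) (aV' := aV) (by rw [hU]; ring) (by rw [hV]; ring) hm
  exact this

lemma lft_mirror {aU rU aV lV : _} {aU' aV' : ℝ} (hU : aU' = -1 - aU) (hV : aV' = -1 - aV)
    (h : Lft aU rU aV lV) : Lft aV' lV aU' rU := by
  subst hU; subst hV
  rcases h with h | ⟨he, h⟩
  · exact Or.inl (by linarith)
  · exact Or.inr ⟨by linarith, fun hc => h ⟨hc.2, hc.1⟩⟩

/-- The blocker step: if `Q` and `B` share position with `B` left-closed, then a vertex meeting
`Q` but missing `B` sits at `a Q + 1`, left-closed, and the touching forces `rQ`. -/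
lemma bstep {aQ lQ rQ aB lB rB aW lW rW : _}
    (hQB : aB = aQ) (hlB : lB)
    (hM : Mt aW lW rW aQ lQ rQ) (hN : ¬ Mt aW lW rW aB lB rB) :
    aW = aQ + 1 ∧ lW ∧ rQ := by
  rcases nmt hN with h | h
  · exfalso
    have h1 := lft_le h
    have h2 := mt_le1 hM
    have he : aQ = aW + 1 := by linarith
    have ht := mt_touch1 hM he
    exact lft_touch h (by linarith) ⟨ht.1, hlB⟩
  · have h1 := lft_le h
    have h2 := mt_le2 hM
    have he : aW = aQ + 1 := by linarith
    have ht := mt_touch2 hM he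
    exact ⟨he, ht.2, ht.1⟩

/-- Endgame half: `s`, `s'` at the same position, both left-closed; a vertex meeting `s`
but missing `s'` forces `r s ∧ ¬ r s'`. -/
lemma endhalf {aS lS rS aS' lS' rS' aT lT rT : _}
    (hSS : aS = aS') (hlS : lS) (hlS' : lS')
    (hM : Mt aT lT rT aS lS rS) (hN : ¬ Mt aT lT rT aS' lS' rS') :
    rS ∧ ¬ rS' := by
  rcases nmt hN with h | h
  · exfalso
    have h1 := lft_le h
    have h2 := mt_le1 hM
    have he : aS = aT + 1 := by linarith
    have ht := mt_touch1 hM he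
    exact lft_touch h (by linarith) ⟨ht.1, hlS'⟩
  · have h1 := lft_le h
    have h2 := mt_le2 hM
    have he : aT = aS + 1 := by linarith
    have ht := mt_touch2 hM he
    exact ⟨ht.1, fun hrS' => lft_touch h (by linarith) ⟨hrS', ht.2⟩⟩

lemma endgame {aS lS rS aS' lS' rS' aT lT rT aT' lT' rT' : _}
    (hSS : aS = aS') (hlS : lS) (hlS' : lS')
    (hM : Mt aT lT rT aS lS rS) (hN : ¬ Mt aT lT rT aS' lS' rS')
    (hM' : Mt aT' lT' rT' aS' lS' rS') (hN' : ¬ Mt aT' lT' rT' aS lS rS) : False := by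
  have h1 := endhalf hSS hlS hlS' hM hN
  have h2 := endhalf hSS.symm hlS' hlS hM' hN'
  exact h1.2 h2.1

/-- Pendant lemma: if `P` meets `V` but misses `U`, then `V` sticks out of `U` on some side. -/
lemma pendant {aP lP rP aV lV rV aU lU rU : _}
    (hM : Mt aP lP rP aV lV rV) (hN : ¬ Mt aP lP rP aU lU rU) :
    (aU < aV ∨ (aU = aV ∧ ¬rU ∧ rV)) ∨ (aV < aU ∨ (aV = aU ∧ lV ∧ ¬lU)) := by
  rcases nmt hN with h | h
  · -- P ≺ U
    have h1 := lft_le h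
    have h2 := mt_le1 hM
    rcases lt_or_eq_of_le (by linarith : aV ≤ aU) with hlt | heq
    · exact Or.inr (Or.inl hlt)
    · have heP : aV = aP + 1 := by linarith
      have ht := mt_touch1 hM heP
      have hnt := lft_touch h (by linarith)
      exact Or.inr (Or.inr ⟨heq, ht.2, fun hlU => hnt ⟨ht.1, hlU⟩⟩)
  · -- U ≺ P
    have h1 := lft_le h
    have h2 := mt_le2 hM
    rcases lt_or_eq_of_le (by linarith : aU ≤ aV) with hlt | heq
    · exact Or.inl (Or.inl hlt)
    · have heP : aP = aV + 1 := by linarith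
      have ht := mt_touch2 hM heP
      have hnt := lft_touch h (by linarith)
      exact Or.inl (Or.inr ⟨heq, fun hrU => hnt ⟨hrU, ht.2⟩, ht.1⟩)

/-- Dichotomy between the two pendant 2-paths at `x`. -/
lemma ydich {ay0 ayp : ℝ} {ly0 ry0 lyp ryp : Prop}
    (d1 : (ayp < ay0 ∨ (ayp = ay0 ∧ ¬ryp ∧ ry0)) ∨ (ay0 < ayp ∨ (ay0 = ayp ∧ ly0 ∧ ¬lyp)))
    (d2 : (ay0 < ayp ∨ (ay0 = ayp ∧ ¬ry0 ∧ ryp)) ∨ (ayp < ay0 ∨ (ayp = ay0 ∧ lyp ∧ ¬ly0))) :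
    (ayp ≤ ay0 ∧ (ayp = ay0 → ¬ryp ∧ ry0 ∧ lyp ∧ ¬ly0)) ∨
    (ay0 ≤ ayp ∧ (ay0 = ayp → ¬ry0 ∧ ryp ∧ ly0 ∧ ¬lyp)) := by
  rcases d1 with d1 | d1 <;> rcases d2 with d2 | d2
  · -- yp <R y0 and y0 <R yp : impossible
    exfalso
    rcases d1 with d1 | d1 <;> rcases d2 with d2 | d2
    · linarith
    · linarith [d2.1.ge]
    · linarith [d1.1.ge]
    · exact d2.2.1 d1.2.2
  · -- yp <R y0 and yp <L y0
    left
    constructor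
    · rcases d1 with d1 | d1
      · linarith
      · linarith [d1.1.le]
    · intro heq
      rcases d1 with d1 | d1
      · exact absurd heq (by linarith)
      · rcases d2 with d2 | d2
        · exact absurd heq (by linarith)
        · exact ⟨d1.2.1, d1.2.2, d2.2.1, d2.2.2⟩
  · -- y0 <L yp and y0 <R yp
    right
    constructor
    · rcases d1 with d1 | d1
      · linarith
      · linarith [d1.1.le]
    · intro heq
      rcases d1 with d1 | d1
      · exact absurd heq (by linarith)
      · rcases d2 with d2 | d2
        · exact absurd heq (by linarith)
        · exact ⟨d2.2.1, d2.2.2, d1.2.1, d1.2.2⟩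
  · -- y0 <L yp and yp <L y0 : impossible
    exfalso
    rcases d1 with d1 | d1 <;> rcases d2 with d2 | d2
    · linarith
    · linarith [d2.1.ge]
    · linarith [d1.1.ge]
    · exact d1.2.2 d2.2.1

/-- The "squeezed `x₁''`" case is impossible. -/
lemma between {ax lx rx aL lL rL aR lR rR ax1 lx1 rx1 ay1 ly1 ry1 aq lq0 rq aw lw rw : _}
    (hxL : Mt ax lx rx aL lL rL) (hxR : Mt ax lx rx aR lR rR)
    (hLx1 : Lft aL rL ax1 lx1) (hx1R : Lft ax1 rx1 aR lR)
    (hx1y1 : Mt ax1 lx1 rx1 ay1 ly1 ry1) (hx1q : Mt ax1 lx1 rx1 aq lq0 rq)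
    (hwq : Mt aw lw rw aq lq0 rq)
    (nwL : ¬ Mt aw lw rw aL lL rL) (nwR : ¬ Mt aw lw rw aR lR rR)
    (nwy1 : ¬ Mt aw lw rw ay1 ly1 ry1) : False := by
  have bL : ax ≤ aL + 1 := mt_le2 hxL
  have bR : aR ≤ ax + 1 := mt_le1 hxR
  have e1 := lft_le hLx1
  have e2 := lft_le hx1R
  have heL : aL = ax - 1 := by linarith
  have heR : aR = ax + 1 := by linarith
  have hex1 : ax1 = ax := by linarith
  have htL := mt_touch2 hxL (by linarith)
  have htR := mt_touch1 hxR (by linarith)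
  have hnl : ¬ lx1 := fun hc => lft_touch hLx1 (by linarith) ⟨htL.1, hc⟩
  have hnr : ¬ rx1 := fun hc => lft_touch hx1R (by linarith) ⟨hc, htR.2⟩
  have s1 := mt_open hx1y1 hnl hnr
  have s2 := mt_open hx1q hnl hnr
  have bq1 : aq ≤ aw + 1 := mt_le1 hwq
  have bq2 : aw ≤ aq + 1 := mt_le2 hwq
  have hL' : Lft aL rL aw lw := by
    rcases nmt nwL with h | h
    · exfalso; have := lft_le h; linarith
    · exact h
  have hR' : Lft aw rw aR lR := by
    rcases nmt nwR with h | h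
    · exact h
    · exfalso; have := lft_le h; linarith
  have hew : aw = ax := by
    have := lft_le hL'
    have := lft_le hR'
    linarith
  rcases nmt nwy1 with h | h
  · have := lft_le h; linarith
  · have := lft_le h; linarith

/-- Main start analysis, in the case where `x₁''` lies to the right of `y₀` and `y'`,
and `y' ⋖ y₀`. Concludes that `q₀` and `y₁'` share their position with `y₁'` left-closed. -/
lemma startRight {ax ay0 ax0 ayp axp ay1 ax1 aq aw : ℝ}
    {lx rx ly0 ry0 lx0 rx0 lyp ryp lxp rxp ly1 ry1 lx1 rx1 lq0 rq lw rw : Prop}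
    (hxy0 : Mt ax lx rx ay0 ly0 ry0)
    (hxyp : Mt ax lx rx ayp lyp ryp)
    (hxy1 : Mt ax lx rx ay1 ly1 ry1)
    (hxq  : Mt ax lx rx aq lq0 rq)
    (hy0x0 : Mt ay0 ly0 ry0 ax0 lx0 rx0)
    (hypxp : Mt ayp lyp ryp axp lxp rxp)
    (hy1x1 : Mt ay1 ly1 ry1 ax1 lx1 rx1)
    (hx1q : Mt ax1 lx1 rx1 aq lq0 rq)
    (hwq : Mt aw lw rw aq lq0 rq)
    (nx0yp : ¬ Mt ax0 lx0 rx0 ayp lyp ryp)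
    (nx0y1 : ¬ Mt ax0 lx0 rx0 ay1 ly1 ry1)
    (nx0q : ¬ Mt ax0 lx0 rx0 aq lq0 rq)
    (nxpy0 : ¬ Mt axp lxp rxp ay0 ly0 ry0)
    (nxpy1 : ¬ Mt axp lxp rxp ay1 ly1 ry1)
    (nxpq : ¬ Mt axp lxp rxp aq lq0 rq)
    (nwy0 : ¬ Mt aw lw rw ay0 ly0 ry0)
    (nwyp : ¬ Mt aw lw rw ayp lyp ryp)
    (nwy1 : ¬ Mt aw lw rw ay1 ly1 ry1)
    (hR0 : Lft ay0 ry0 ax1 lx1)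
    (hRp : Lft ayp ryp ax1 lx1)
    (hyp1 : ayp ≤ ay0)
    (hyp2 : ayp = ay0 → ¬ryp ∧ ry0 ∧ lyp ∧ ¬ly0) :
    aq = ay1 ∧ ly1 := by
  have by0 : ay0 ≤ ax + 1 := mt_le1 hxy0
  have by0' : ax ≤ ay0 + 1 := mt_le2 hxy0
  have byp : ayp ≤ ax + 1 := mt_le1 hxyp
  have byp' : ax ≤ ayp + 1 := mt_le2 hxyp
  have by1 : ay1 ≤ ax + 1 := mt_le1 hxy1
  have by1' : ax ≤ ay1 + 1 := mt_le2 hxy1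
  have bq : aq ≤ ax + 1 := mt_le1 hxq
  have bq' : ax ≤ aq + 1 := mt_le2 hxq
  have b2 : ay0 + 1 ≤ ax1 := lft_le hR0
  have b3 : ayp + 1 ≤ ax1 := lft_le hRp
  have b4 : ax1 ≤ ay1 + 1 := mt_le1 hy1x1
  have b4' : ay1 ≤ ax1 + 1 := mt_le2 hy1x1
  have b5 : aq ≤ ax1 + 1 := mt_le1 hx1q
  have b5' : ax1 ≤ aq + 1 := mt_le2 hx1q
  have bpx : axp ≤ ayp + 1 := mt_le1 hypxp
  have bpx' : ayp ≤ axp + 1 := mt_le2 hypxp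
  have b0x : ax0 ≤ ay0 + 1 := mt_le1 hy0x0
  have b0x' : ay0 ≤ ax0 + 1 := mt_le2 hy0x0
  have bwq : aq ≤ aw + 1 := mt_le1 hwq
  have bwq' : aw ≤ aq + 1 := mt_le2 hwq
  have c1 : ay0 ≤ ay1 := by linarith
  have c2 : ayp ≤ ay1 := by linarith
  have c3 : ay0 ≤ aq := by linarith
  have c4 : ayp ≤ aq := by linarith
  -- Step 1a : x' ≺ y0
  have s1a : Lft axp rxp ay0 ly0 := by
    rcases nmt nxpy0 with h | h
    · exact h
    · exfalso
      have h1 := lft_le h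
      have heq : ayp = ay0 := by linarith
      have ht := mt_touch1 hypxp (by linarith)
      exact (hyp2 heq).1 ht.1
  -- Step 1b : x' ≺ y1'
  have s1b : Lft axp rxp ay1 ly1 := by
    rcases nmt nxpy1 with h | h
    · exact h
    · exfalso
      have h1 := lft_le h
      have ht1 := mt_touch1 hypxp (by linarith : axp = ayp + 1)
      have ht2 := mt_touch1 hy1x1 (by linarith : ax1 = ay1 + 1)
      exact lft_touch hRp (by linarith) ⟨ht1.1, ht2.2⟩
  -- Step 1c : x' ≺ q0
  have s1c : Lft axp rxp aq lq0 := by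
    rcases nmt nxpq with h | h
    · exact h
    · exfalso
      have h1 := lft_le h
      have ht1 := mt_touch1 hypxp (by linarith : axp = ayp + 1)
      have ht2 := mt_touch2 hx1q (by linarith : ax1 = aq + 1)
      exact lft_touch hRp (by linarith) ⟨ht1.1, ht2.2⟩
  have s1cle := lft_le s1c
  -- Step 2 : y' ≺ w
  have s2 : Lft ayp ryp aw lw := by
    rcases nmt nwyp with h | h
    · exfalso
      have h1 := lft_le h
      have htw := mt_touch1 hwq (by linarith : aq = aw + 1)
      have htp := mt_touch2 hypxp (by linarith : ayp = axp + 1)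
      exact lft_touch h (by linarith) ⟨htw.1, htp.2⟩
    · exact h
  have s2le := lft_le s2
  -- Step 3 : y0 ≺ w
  have s3 : Lft ay0 ry0 aw lw := by
    rcases nmt nwy0 with h | h
    · exfalso
      have h1 := lft_le h
      have ht0 := mt_touch1 hxy0 (by linarith : ay0 = ax + 1)
      have htp := mt_touch2 hxyp (by linarith : ax = ayp + 1)
      have hnrw : ¬ rw := fun hc => lft_touch h (by linarith) ⟨hc, ht0.2⟩
      have hnlw : ¬ lw := fun hc => lft_touch s2 (by linarith) ⟨htp.1, hc⟩
      have := mt_open hwq hnlw hnrw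
      linarith
    · exact h
  have s3le := lft_le s3
  -- Step 4 : y1' ≺ w
  have s4 : Lft ay1 ry1 aw lw := by
    rcases nmt nwy1 with h | h
    · exfalso
      have h1 := lft_le h
      have heq : ayp = ay0 := by linarith
      have ht := mt_touch2 hxyp (by linarith : ax = ayp + 1)
      exact (hyp2 heq).1 ht.1
    · exact h
  have s4le := lft_le s4
  have c5 : ay1 ≤ aq := by linarith
  -- Step 6 : aq ≤ ay1
  have c6 : aq ≤ ay1 := by
    by_contra hlt
    push_neg at hlt
    rcases nmt nx0y1 with hB | hA
    · -- x0 ≺ y1'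
      rcases nmt nx0yp with hp1 | hp2
      · -- x0 ≺ y'
        have h1 := lft_le hp1
        have heq : ayp = ay0 := by linarith
        have ht := mt_touch2 hy0x0 (by linarith : ay0 = ax0 + 1)
        exact (hyp2 heq).2.2.2 ht.2
      · -- y' ≺ x0
        have h1 := lft_le hp2
        have h2 := lft_le hB
        linarith
    · -- y1' ≺ x0
      rcases nmt nx0q with hq1 | hq2
      · -- x0 ≺ q
        have h1 := lft_le hq1
        have h2 := lft_le hA
        have ht1 := mt_touch2 hxy1 (by linarith : ax = ay1 + 1)
        have ht2 := mt_touch1 hxq (by linarith : aq = ax + 1)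
        have hnlx0 : ¬ lx0 := fun hc => lft_touch hA (by linarith) ⟨ht1.1, hc⟩
        have hnrx0 : ¬ rx0 := fun hc => lft_touch hq1 (by linarith) ⟨hc, ht2.2⟩
        have := mt_open (mt_symm hy0x0) hnlx0 hnrx0
        linarith
      · -- q ≺ x0
        have h1 := lft_le hq2
        linarith
  have heq : aq = ay1 := le_antisymm c6 c5
  have hew : aw = ay1 + 1 := by linarith
  have htw := mt_touch2 hwq (by linarith : aw = aq + 1)
  have hrq : rq := htw.1
  have hnry1 : ¬ ry1 := fun hc => lft_touch s4 hew ⟨hc, htw.2⟩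
  -- Step 7 : ly1
  refine ⟨heq, ?_⟩
  rcases nmt nx0y1 with hB | hA
  · -- x0 ≺ y1'
    rcases nmt nx0yp with hp1 | hp2
    · exfalso
      have h1 := lft_le hp1
      have heq2 : ayp = ay0 := by linarith
      have ht := mt_touch2 hy0x0 (by linarith : ay0 = ax0 + 1)
      exact (hyp2 heq2).2.2.2 ht.2
    · have h1 := lft_le hp2
      have h2 := lft_le hB
      have ht := mt_touch1 hxy1 (by linarith : ay1 = ax + 1)
      exact ht.2
  · -- y1' ≺ x0
    exfalso
    have h1 := lft_le hA
    have ht := mt_touch1 hy0x0 (by linarith : ax0 = ay0 + 1)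
    rcases nmt nx0q with hq1 | hq2
    · have := lft_le hq1; linarith
    · exact lft_touch hq2 (by linarith) ⟨hrq, ht.2⟩

/-- The full start lemma: in any representation of the gadget around `x` (with one extra
neighbour `w` of `q₀` missing all of `y₀, y', y₁'`), `q₀` and `y₁'` share their position and
`y₁'` is closed on the left or on the right. -/
lemma startFull {ax ay0 ax0 ayp axp ay1 ax1 aq aw : ℝ}
    {lx rx ly0 ry0 lx0 rx0 lyp ryp lxp rxp ly1 ry1 lx1 rx1 lq0 rq lw rw : Prop}
    (hxy0 : Mt ax lx rx ay0 ly0 ry0)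
    (hxyp : Mt ax lx rx ayp lyp ryp)
    (hxy1 : Mt ax lx rx ay1 ly1 ry1)
    (hxq  : Mt ax lx rx aq lq0 rq)
    (hy0x0 : Mt ay0 ly0 ry0 ax0 lx0 rx0)
    (hypxp : Mt ayp lyp ryp axp lxp rxp)
    (hy1x1 : Mt ay1 ly1 ry1 ax1 lx1 rx1)
    (hx1q : Mt ax1 lx1 rx1 aq lq0 rq)
    (hwq : Mt aw lw rw aq lq0 rq)
    (nx0yp : ¬ Mt ax0 lx0 rx0 ayp lyp ryp)
    (nx0y1 : ¬ Mt ax0 lx0 rx0 ay1 ly1 ry1)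
    (nx0q : ¬ Mt ax0 lx0 rx0 aq lq0 rq)
    (nxpy0 : ¬ Mt axp lxp rxp ay0 ly0 ry0)
    (nxpy1 : ¬ Mt axp lxp rxp ay1 ly1 ry1)
    (nxpq : ¬ Mt axp lxp rxp aq lq0 rq)
    (nx1y0 : ¬ Mt ax1 lx1 rx1 ay0 ly0 ry0)
    (nx1yp : ¬ Mt ax1 lx1 rx1 ayp lyp ryp)
    (nwy0 : ¬ Mt aw lw rw ay0 ly0 ry0)
    (nwyp : ¬ Mt aw lw rw ayp lyp ryp)
    (nwy1 : ¬ Mt aw lw rw ay1 ly1 ry1) :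
    (aq = ay1 ∧ ly1) ∨ (aq = ay1 ∧ ry1) := by
  have d1 := pendant (mt_symm hy0x0) nx0yp
  have d2 := pendant (mt_symm hypxp) nxpy0
  have hyp12 := ydich d1 d2
  rcases nmt nx1y0 with h0 | h0 <;> rcases nmt nx1yp with hp | hp
  · -- x1 ≺ y0 and x1 ≺ y' : mirror case
    rcases hyp12 with ⟨hle, hcond⟩ | ⟨hle, hcond⟩
    · -- ayp ≤ ay0; in mirrored world the y0-slot is y'
      have key := startRight
        (mt_mirror rfl rfl hxyp) (mt_mirror rfl rfl hxy0) (mt_mirror rfl rfl hxy1)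
        (mt_mirror rfl rfl hxq)
        (mt_mirror rfl rfl hypxp) (mt_mirror rfl rfl hy0x0) (mt_mirror rfl rfl hy1x1)
        (mt_mirror rfl rfl hx1q) (mt_mirror rfl rfl hwq)
        (nmt_mirror rfl rfl nxpy0) (nmt_mirror rfl rfl nxpy1) (nmt_mirror rfl rfl nxpq)
        (nmt_mirror rfl rfl nx0yp) (nmt_mirror rfl rfl nx0y1) (nmt_mirror rfl rfl nx0q)
        (nmt_mirror rfl rfl nwyp) (nmt_mirror rfl rfl nwy0) (nmt_mirror rfl rfl nwy1)
        (lft_mirror rfl rfl hp) (lft_mirror rfl rfl h0)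
        (by linarith)
        (by intro he
            have := hcond (by linarith)
            exact ⟨this.2.2.2, this.2.2.1, this.2.1, this.1⟩)
      exact Or.inr ⟨by linarith [key.1], key.2⟩
    · -- ay0 ≤ ayp
      have key := startRight
        (mt_mirror rfl rfl hxy0) (mt_mirror rfl rfl hxyp) (mt_mirror rfl rfl hxy1)
        (mt_mirror rfl rfl hxq)
        (mt_mirror rfl rfl hy0x0) (mt_mirror rfl rfl hypxp) (mt_mirror rfl rfl hy1x1)
        (mt_mirror rfl rfl hx1q) (mt_mirror rfl rfl hwq)
        (nmt_mirror rfl rfl nx0yp) (nmt_mirror rfl rfl nx0y1) (nmt_mirror rfl rfl nx0q)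
        (nmt_mirror rfl rfl nxpy0) (nmt_mirror rfl rfl nxpy1) (nmt_mirror rfl rfl nxpq)
        (nmt_mirror rfl rfl nwy0) (nmt_mirror rfl rfl nwyp) (nmt_mirror rfl rfl nwy1)
        (lft_mirror rfl rfl h0) (lft_mirror rfl rfl hp)
        (by linarith)
        (by intro he
            have := hcond (by linarith)
            exact ⟨this.2.2.2, this.2.2.1, this.2.1, this.1⟩)
      exact Or.inr ⟨by linarith [key.1], key.2⟩
  · -- x1 ≺ y0, y' ≺ x1 : between with L := y', R := y0
    exact absurd (between hxyp hxy0 hp h0 (mt_symm hy1x1) hx1q hwq nwyp nwy0 nwy1) id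
  · -- y0 ≺ x1, x1 ≺ y' : between with L := y0, R := y'
    exact absurd (between hxy0 hxyp h0 hp (mt_symm hy1x1) hx1q hwq nwy0 nwyp nwy1) id
  · -- y0 ≺ x1 and y' ≺ x1 : straight case
    rcases hyp12 with ⟨hle, hcond⟩ | ⟨hle, hcond⟩
    · exact Or.inl (startRight hxy0 hxyp hxy1 hxq hy0x0 hypxp hy1x1 hx1q hwq
        nx0yp nx0y1 nx0q nxpy0 nxpy1 nxpq nwy0 nwyp nwy1 h0 hp hle hcond)
    · exact Or.inl (startRight hxyp hxy0 hxy1 hxq hypxp hy0x0 hy1x1 hx1q hwq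
        nxpy0 nxpy1 nxpq nx0yp nx0y1 nx0q nwyp nwy0 nwy1 hp h0 hle hcond)

/-- A generalized unit interval. -/
def uset (a : ℝ) (l r : Bool) : Set ℝ :=
  {x | (if l then a ≤ x else a < x) ∧ (if r then x ≤ a + 1 else x < a + 1)}

lemma unitFam_eq {s : Set ℝ} (hs : s ∈ UnitFam) :
    ∃ (a : ℝ) (l r : Bool), s = uset a l r := by
  rcases hs with ((⟨a, ha⟩ | ⟨a, ha⟩) | ⟨a, ha⟩) | ⟨a, ha⟩
  · exact ⟨a, true, true, by ext x; simp [ha, uset, Set.mem_Icc]⟩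
  · exact ⟨a, false, false, by ext x; simp [ha, uset, Set.mem_Ioo]⟩
  · exact ⟨a, true, false, by ext x; simp [ha, uset, Set.mem_Ico]⟩
  · exact ⟨a, false, true, by ext x; simp [ha, uset, Set.mem_Ioc]⟩

lemma uset_le_left {a x : ℝ} {l : Bool} (h : if l then a ≤ x else a < x) : a ≤ x := by
  cases l
  · simp at h; linarith
  · simpa using h

lemma uset_le_right {a x : ℝ} {r : Bool} (h : if r then x ≤ a + 1 else x < a + 1) :
    x ≤ a + 1 := by
  cases r
  · simp at h; linarith
  · simpa using h

lemma uset_inter_nonempty (a b : ℝ) (l r l' r' : Bool) :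
    (uset a l r ∩ uset b l' r').Nonempty ↔
      Mt a (l = true) (r = true) b (l' = true) (r' = true) := by
  constructor
  · rintro ⟨x, ⟨hx1, hx2⟩, hx3, hx4⟩
    have w1 := uset_le_left hx1
    have w2 := uset_le_right hx2
    have w3 := uset_le_left hx3
    have w4 := uset_le_right hx4
    constructor
    · rcases lt_trichotomy b (a + 1) with h | h | h
      · exact Or.inl h
      · refine Or.inr ⟨h, ?_, ?_⟩
        · -- r = true
          cases r
          · exfalso; simp at hx2; linarith
          · rfl
        · cases l'
          · exfalso; simp at hx3; linarith
          · rfl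
      · exfalso; linarith
    · rcases lt_trichotomy a (b + 1) with h | h | h
      · exact Or.inl h
      · refine Or.inr ⟨h, ?_, ?_⟩
        · cases r'
          · exfalso; simp at hx4; linarith
          · rfl
        · cases l
          · exfalso; simp at hx1; linarith
          · rfl
      · exfalso; linarith
  · rintro ⟨h1, h2⟩
    rcases h1 with h1 | ⟨he1, hr, hl'⟩
    · rcases h2 with h2 | ⟨he2, hr', hl⟩
      · -- strict overlap
        refine ⟨(max a b + min (a + 1) (b + 1)) / 2, ⟨?_, ?_⟩, ?_, ?_⟩ <;>
        · have hM1 : a ≤ max a b := le_max_left _ _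
          have hM2 : b ≤ max a b := le_max_right _ _
          have hm1 : min (a + 1) (b + 1) ≤ a + 1 := min_le_left _ _
          have hm2 : min (a + 1) (b + 1) ≤ b + 1 := min_le_right _ _
          have hMm : max a b < min (a + 1) (b + 1) :=
            max_lt (lt_min (by linarith) (by linarith)) (lt_min (by linarith) (by linarith))
          split <;> linarith
      · -- a = b + 1, touching at a
        refine ⟨a, ⟨?_, ?_⟩, ?_, ?_⟩
        · simp [hl]
        · split <;> linarith
        · split <;> linarith
        · simp [hr', he2]
    · -- b = a + 1, touching at b
      refine ⟨b, ⟨?_, ?_⟩, ?_, ?_⟩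
      · split <;> linarith
      · simp [hr, he1]
      · simp [hl']
      · split <;> linarith


lemma mt_mirror_iff {aU aV aU' aV' : ℝ} {lU rU lV rV : Prop}
    (hU : aU' = -1 - aU) (hV : aV' = -1 - aV) :
    Mt aU' rU lU aV' rV lV ↔ Mt aU lU rU aV lV rV := by
  constructor
  · intro h
    exact mt_mirror (show aU = -1 - aU' by rw [hU]; ring)
      (show aV = -1 - aV' by rw [hV]; ring) h
  · exact mt_mirror hU hV

/-- The blocker vertex used along the path. -/
def Bv (i : ℕ) (k : ℕ) (hk : k < i) : SVert i :=
  if h : k = 0 then SVert.y1' else SVert.lq ⟨k - 1, by omega⟩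

lemma Bv_color (i n : ℕ) (hn : n < i) : SColor i (Bv i n hn) = decide (n % 2 = 1) := by
  by_cases h0 : n = 0
  · subst h0; simp [Bv, SColor]
  · simp only [Bv, h0, dite_false, SColor, decide_eq_decide]
    omega

lemma Bv_nadj_q (i n m : ℕ) (hn : n < i) (hm : m < i) (h : n + 1 ≤ m) :
    ¬ SAdj i (SVert.q ⟨m, hm⟩) (Bv i n hn) := by
  by_cases h0 : n = 0
  · subst h0
    simp only [Bv, dite_true]
    rintro (hc | hc) <;> exact hc
  · simp only [Bv, h0, dite_false]
    rintro (hc | hc)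
    · have hc' : m = n - 1 := hc
      omega
    · exact hc

lemma Bv_nadj_lq (i n : ℕ) (hn : n < i) (h : n < i - 1) :
    ¬ SAdj i (SVert.lq ⟨n, h⟩) (Bv i n hn) := by
  by_cases h0 : n = 0
  · subst h0
    simp only [Bv, dite_true]
    rintro (hc | hc) <;> exact hc
  · simp only [Bv, h0, dite_false]
    rintro (hc | hc) <;> exact hc

lemma Bv_nadj_s1 (i n : ℕ) (hn : n < i) : ¬ SAdj i SVert.s1 (Bv i n hn) := by
  by_cases h0 : n = 0
  · subst h0
    simp only [Bv, dite_true]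
    rintro (hc | hc) <;> exact hc
  · simp only [Bv, h0, dite_false]
    rintro (hc | hc) <;> exact hc

lemma Bv_nadj_s2 (i n : ℕ) (hn : n < i) : ¬ SAdj i SVert.s2 (Bv i n hn) := by
  by_cases h0 : n = 0
  · subst h0
    simp only [Bv, dite_true]
    rintro (hc | hc) <;> exact hc
  · simp only [Bv, h0, dite_false]
    rintro (hc | hc) <;> exact hc

/-- The main engine: from the start condition (in rightward orientation) the forced
positions propagate along the path and collide with the two pendant paths at its end. -/
theorem coreR (i : ℕ) (hi : 1 ≤ i) (A : SVert i → ℝ) (L R : SVert i → Prop)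
    (H : ∀ u v, SColor i u ≠ SColor i v →
      (SAdj i u v ↔ Mt (A u) (L u) (R u) (A v) (L v) (R v)))
    (hstart : A (SVert.q ⟨0, hi⟩) = A SVert.y1' ∧ L SVert.y1') : False := by
  have key : ∀ k, ∀ hk : k < i, A (SVert.q ⟨k, hk⟩) = A (Bv i k hk) ∧ L (Bv i k hk) := by
    intro k
    induction k with
    | zero =>
      intro hk
      simpa [Bv] using hstart
    | succ n ih =>
      intro hk
      have hn : n < i := by omega
      have hn1 : n < i - 1 := by omega
      obtain ⟨hA, hL⟩ := ih hn
      set Qn := SVert.q (⟨n, hn⟩ : Fin i) with hQn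
      set Qn1 := SVert.q (⟨n + 1, hk⟩ : Fin i) with hQn1
      set Ln := SVert.lq (⟨n, hn1⟩ : Fin (i - 1)) with hLn
      have hcQ : SColor i Qn1 ≠ SColor i Qn := by
        simp only [hQn, hQn1, SColor, ne_eq, decide_eq_decide]
        omega
      have hMq : Mt (A Qn1) (L Qn1) (R Qn1) (A Qn) (L Qn) (R Qn) :=
        (H Qn1 Qn hcQ).mp (Or.inr (show (n : ℕ) + 1 = n + 1 from rfl))
      have hcB : SColor i Qn1 ≠ SColor i (Bv i n hn) := by
        rw [Bv_color]
        simp only [hQn1, SColor, ne_eq, decide_eq_decide]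
        omega
      have hNq : ¬ Mt (A Qn1) (L Qn1) (R Qn1) (A (Bv i n hn)) (L (Bv i n hn)) (R (Bv i n hn)) :=
        fun hm => Bv_nadj_q i n (n + 1) hn hk (le_refl _) ((H _ _ hcB).mpr hm)
      have bq := bstep hA.symm hL hMq hNq
      have hcL : SColor i Ln ≠ SColor i Qn := by
        simp only [hQn, hLn, SColor, ne_eq, decide_eq_decide]
        omega
      have hML : Mt (A Ln) (L Ln) (R Ln) (A Qn) (L Qn) (R Qn) :=
        (H Ln Qn hcL).mp (Or.inr (show (n : ℕ) = n from rfl))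
      have hcLB : SColor i Ln ≠ SColor i (Bv i n hn) := by
        rw [Bv_color]
        simp only [hLn, SColor, ne_eq, decide_eq_decide]
        omega
      have hNL : ¬ Mt (A Ln) (L Ln) (R Ln) (A (Bv i n hn)) (L (Bv i n hn)) (R (Bv i n hn)) :=
        fun hm => Bv_nadj_lq i n hn hn1 ((H _ _ hcLB).mpr hm)
      have bl := bstep hA.symm hL hML hNL
      have hBv : Bv i (n + 1) hk = Ln := by
        simp only [Bv, Nat.succ_ne_zero, dite_false, hLn, Nat.add_sub_cancel]
      rw [hBv]
      exact ⟨by linarith [bq.1, bl.1], bl.2.1⟩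
  have hlast : i - 1 < i := by omega
  obtain ⟨hA, hL⟩ := key (i - 1) hlast
  set Q := SVert.q (⟨i - 1, hlast⟩ : Fin i) with hQ
  have hadj1 : SAdj i SVert.s1 Q := Or.inr (show (i - 1) + 1 = i by omega)
  have hadj2 : SAdj i SVert.s2 Q := Or.inr (show (i - 1) + 1 = i by omega)
  have hcS1 : SColor i (SVert.s1 : SVert i) ≠ SColor i Q := by
    simp only [hQ, SColor, ne_eq, decide_eq_decide]
    omega
  have hcS2 : SColor i (SVert.s2 : SVert i) ≠ SColor i Q := by
    simp only [hQ, SColor, ne_eq, decide_eq_decide]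
    omega
  have hMs1 : Mt (A SVert.s1) (L SVert.s1) (R SVert.s1) (A Q) (L Q) (R Q) :=
    (H _ _ hcS1).mp hadj1
  have hMs2 : Mt (A SVert.s2) (L SVert.s2) (R SVert.s2) (A Q) (L Q) (R Q) :=
    (H _ _ hcS2).mp hadj2
  have hcS1B : SColor i (SVert.s1 : SVert i) ≠ SColor i (Bv i (i - 1) hlast) := by
    rw [Bv_color]
    simp only [SColor, ne_eq, decide_eq_decide]
    omega
  have hcS2B : SColor i (SVert.s2 : SVert i) ≠ SColor i (Bv i (i - 1) hlast) := by
    rw [Bv_color]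
    simp only [SColor, ne_eq, decide_eq_decide]
    omega
  have hNs1 : ¬ Mt (A SVert.s1) (L SVert.s1) (R SVert.s1)
      (A (Bv i (i - 1) hlast)) (L (Bv i (i - 1) hlast)) (R (Bv i (i - 1) hlast)) :=
    fun hm => Bv_nadj_s1 i (i - 1) hlast ((H _ _ hcS1B).mpr hm)
  have hNs2 : ¬ Mt (A SVert.s2) (L SVert.s2) (R SVert.s2)
      (A (Bv i (i - 1) hlast)) (L (Bv i (i - 1) hlast)) (R (Bv i (i - 1) hlast)) :=
    fun hm => Bv_nadj_s2 i (i - 1) hlast ((H _ _ hcS2B).mpr hm)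
  have bs1 := bstep hA.symm hL hMs1 hNs1
  have bs2 := bstep hA.symm hL hMs2 hNs2
  have hcT1 : SColor i (SVert.t1 : SVert i) ≠ SColor i (SVert.s1 : SVert i) := by
    simp only [SColor, ne_eq, decide_eq_decide]
    omega
  have hcT1' : SColor i (SVert.t1 : SVert i) ≠ SColor i (SVert.s2 : SVert i) := by
    simp only [SColor, ne_eq, decide_eq_decide]
    omega
  have hcT2 : SColor i (SVert.t2 : SVert i) ≠ SColor i (SVert.s2 : SVert i) := by
    simp only [SColor, ne_eq, decide_eq_decide]
    omega
  have hcT2' : SColor i (SVert.t2 : SVert i) ≠ SColor i (SVert.s1 : SVert i) := by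
    simp only [SColor, ne_eq, decide_eq_decide]
    omega
  have hMt1 : Mt (A SVert.t1) (L SVert.t1) (R SVert.t1)
      (A SVert.s1) (L SVert.s1) (R SVert.s1) :=
    (H _ _ hcT1).mp (Or.inr trivial)
  have hMt2 : Mt (A SVert.t2) (L SVert.t2) (R SVert.t2)
      (A SVert.s2) (L SVert.s2) (R SVert.s2) :=
    (H _ _ hcT2).mp (Or.inr trivial)
  have hNt1 : ¬ Mt (A SVert.t1) (L SVert.t1) (R SVert.t1)
      (A SVert.s2) (L SVert.s2) (R SVert.s2) :=
    fun hm => (by rintro (hc | hc) <;> exact hc : ¬ SAdj i SVert.t1 SVert.s2)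
      ((H _ _ hcT1').mpr hm)
  have hNt2 : ¬ Mt (A SVert.t2) (L SVert.t2) (R SVert.t2)
      (A SVert.s1) (L SVert.s1) (R SVert.s1) :=
    fun hm => (by rintro (hc | hc) <;> exact hc : ¬ SAdj i SVert.t2 SVert.s1)
      ((H _ _ hcT2').mpr hm)
  exact endgame (by linarith [bs1.1, bs2.1] : A SVert.s1 = A SVert.s2)
    bs1.2.1 bs2.2.1 hMt1 hNt1 hMt2 hNt2

/-- The abstract impossibility theorem, over any family of generalized unit intervals. -/
theorem core_s17 (i : ℕ) (hi : 1 ≤ i) (A : SVert i → ℝ) (L R : SVert i → Prop)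
    (H : ∀ u v, SColor i u ≠ SColor i v →
      (SAdj i u v ↔ Mt (A u) (L u) (R u) (A v) (L v) (R v))) : False := by
  set q0 : SVert i := SVert.q ⟨0, hi⟩ with hq0
  have hcq0 : SColor i q0 = false := by simp [hq0, SColor]
  -- the extra witness w adjacent to q0 and missing y0, y', y1'
  obtain ⟨w, hwq, nwy0, nwyp, nwy1⟩ :
      ∃ w : SVert i,
        Mt (A w) (L w) (R w) (A q0) (L q0) (R q0) ∧
        ¬ Mt (A w) (L w) (R w) (A SVert.y0) (L SVert.y0) (R SVert.y0) ∧
        ¬ Mt (A w) (L w) (R w) (A SVert.y') (L SVert.y') (R SVert.y') ∧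
        ¬ Mt (A w) (L w) (R w) (A SVert.y1') (L SVert.y1') (R SVert.y1') := by
    rcases Nat.lt_or_ge 1 i with h2 | h2
    · refine ⟨SVert.q ⟨1, h2⟩, ?_, ?_, ?_, ?_⟩
      · exact (H _ _ (by simp [hq0, SColor])).mp (Or.inr (show (0 : ℕ) + 1 = 0 + 1 from rfl))
      · exact fun hm => (by rintro (hc | hc) <;> exact hc :
          ¬ SAdj i (SVert.q ⟨1, h2⟩) SVert.y0) ((H _ _ (by simp [SColor])).mpr hm)
      · exact fun hm => (by rintro (hc | hc) <;> exact hc :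
          ¬ SAdj i (SVert.q ⟨1, h2⟩) SVert.y') ((H _ _ (by simp [SColor])).mpr hm)
      · exact fun hm => (by rintro (hc | hc) <;> exact hc :
          ¬ SAdj i (SVert.q ⟨1, h2⟩) SVert.y1') ((H _ _ (by simp [SColor])).mpr hm)
    · have hi1 : i = 1 := by omega
      subst hi1
      refine ⟨SVert.s1, ?_, ?_, ?_, ?_⟩
      · exact (H _ _ (by simp [hq0, SColor])).mp (Or.inr (show (0 : ℕ) + 1 = 1 from rfl))
      · exact fun hm => (by rintro (hc | hc) <;> exact hc :
          ¬ SAdj 1 SVert.s1 SVert.y0) ((H _ _ (by simp [SColor])).mpr hm)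
      · exact fun hm => (by rintro (hc | hc) <;> exact hc :
          ¬ SAdj 1 SVert.s1 SVert.y') ((H _ _ (by simp [SColor])).mpr hm)
      · exact fun hm => (by rintro (hc | hc) <;> exact hc :
          ¬ SAdj 1 SVert.s1 SVert.y1') ((H _ _ (by simp [SColor])).mpr hm)
  -- gadget meets
  have hxy0 := (H SVert.x SVert.y0 (by simp [SColor])).mp (Or.inl trivial)
  have hxyp := (H SVert.x SVert.y' (by simp [SColor])).mp (Or.inl trivial)
  have hxy1 := (H SVert.x SVert.y1' (by simp [SColor])).mp (Or.inl trivial)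
  have hxq := (H SVert.x q0 (by simp [hq0, SColor])).mp (Or.inl (show (0 : ℕ) = 0 from rfl))
  have hy0x0 := (H SVert.y0 SVert.x0 (by simp [SColor])).mp (Or.inl trivial)
  have hypxp := (H SVert.y' SVert.x' (by simp [SColor])).mp (Or.inl trivial)
  have hy1x1 := (H SVert.y1' SVert.x1'' (by simp [SColor])).mp (Or.inl trivial)
  have hx1q := (H SVert.x1'' q0 (by simp [hq0, SColor])).mp (Or.inl (show (0 : ℕ) = 0 from rfl))
  -- gadget non-edges
  have nx0yp := fun hm => (by rintro (hc | hc) <;> exact hc :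
    ¬ SAdj i SVert.x0 SVert.y') ((H _ _ (by simp [SColor])).mpr hm)
  have nx0y1 := fun hm => (by rintro (hc | hc) <;> exact hc :
    ¬ SAdj i SVert.x0 SVert.y1') ((H _ _ (by simp [SColor])).mpr hm)
  have nx0q := fun hm => (by rintro (hc | hc) <;> exact hc :
    ¬ SAdj i SVert.x0 q0) ((H _ _ (by simp [hq0, SColor])).mpr hm)
  have nxpy0 := fun hm => (by rintro (hc | hc) <;> exact hc :
    ¬ SAdj i SVert.x' SVert.y0) ((H _ _ (by simp [SColor])).mpr hm)
  have nxpy1 := fun hm => (by rintro (hc | hc) <;> exact hc :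
    ¬ SAdj i SVert.x' SVert.y1') ((H _ _ (by simp [SColor])).mpr hm)
  have nxpq := fun hm => (by rintro (hc | hc) <;> exact hc :
    ¬ SAdj i SVert.x' q0) ((H _ _ (by simp [hq0, SColor])).mpr hm)
  have nx1y0 := fun hm => (by rintro (hc | hc) <;> exact hc :
    ¬ SAdj i SVert.x1'' SVert.y0) ((H _ _ (by simp [SColor])).mpr hm)
  have nx1yp := fun hm => (by rintro (hc | hc) <;> exact hc :
    ¬ SAdj i SVert.x1'' SVert.y') ((H _ _ (by simp [SColor])).mpr hm)
  rcases startFull hxy0 hxyp hxy1 hxq hy0x0 hypxp hy1x1 hx1q hwq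
    nx0yp nx0y1 nx0q nxpy0 nxpy1 nxpq nx1y0 nx1yp nwy0 nwyp nwy1 with ⟨he, hl⟩ | ⟨he, hr⟩
  · exact coreR i hi A L R H ⟨he, hl⟩
  · refine coreR i hi (fun v => -1 - A v) R L ?_ ⟨congrArg (fun t => -1 - t) he, hr⟩
    intro u v hc
    exact (H u v hc).trans (mt_mirror_iff rfl rfl).symm


/-- For every `i ≥ 1`, `S_i` is not a mixed unit interval bigraph. -/
theorem Si_not_U_bigraph (i : ℕ) (hi : 1 ≤ i) :
    ¬ IsUBigraph (SColor i) (SAdj i) := by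
  rintro ⟨f, hfam, hrep⟩
  choose A L R hA using fun v => unitFam_eq (hfam v)
  have H : ∀ u v, SColor i u ≠ SColor i v →
      (SAdj i u v ↔ Mt (A u) (L u = true) (R u = true) (A v) (L v = true) (R v = true)) := by
    intro u v hc
    refine (hrep u v hc).trans ?_
    rw [hA u, hA v]
    exact uset_inter_nonempty _ _ _ _ _ _
  exact core_s17 i hi A (fun v => L v = true) (fun v => R v = true) H
end
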